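/- arXiv:1512.03228 — 7 statements merged into one kernel-verified Lean document; each statement's English description precedes it below -/
import Mathlib

section
/- Fix 0 < β < 1. The subtransfer operator T_β maps L¹(I₁) into L¹(I₁) with ‖T_β f‖_{L¹(I₁)} ≤ ‖f‖_{L¹(I₁)} for all f ∈ L¹(I₁), and for every f ∈ L¹(I₁) the iterates satisfy ‖T_β^N f‖_{L¹(I₁)} → 0 as N → +∞. -/
/-!
Write `T_β f = ∑_{j ≠ 0} φ_j' · f ∘ φ_j` with the branches `φ_j x = -β / (x + 2j)`. They map
`(-1, 1)` injectively onto pairwise disjoint subintervals of `(-β, β)`, so by the change of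
variables formula `∫_{(-1,1)} |T_β f| ≤ ∫_{(-β,β)} |f|`. This gives the contraction, and also
shows that the branches pull null sets back to null sets, which is what measurability of `T_β f`
needs.

For the decay, `ψ t = 1 / (1 - t²)` satisfies `T_β ψ ≤ β ψ` on `(-1, 1)`: the `j`-th term of
`T_β ψ x` is `β / ((x + 2j)² - β²) ≤ β / ((x + 2j)² - 1)`, and `∑_{j ≠ 0} 1 / ((x + 2j)² - 1)`
telescopes to `1 / (1 - x²)`. Hence if `|f| ≤ m` on `(-1, 1)`, then
`∫ |T_β^{n+1} f| ≤ m β^n ∫_{(-β,β)} ψ`. A general `f` is the sum of such a bounded part and a tail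
of small `L¹` norm, which `T_β` does not enlarge.
-/

open MeasureTheory Set Filter

/-- The subtransfer operator `T_β f(x) = ∑_{j∈ℤ, j≠0} (β/(x+2j)²) f(-β/(x+2j))`. -/
noncomputable def Tsub (β : ℝ) (f : ℝ → ℝ) (x : ℝ) : ℝ :=
  ∑' j : {j : ℤ // j ≠ 0},
    (β / (x + 2 * ((j : ℤ) : ℝ)) ^ 2) * f (-β / (x + 2 * ((j : ℤ) : ℝ)))

open scoped ENNReal Topology

theorem aestronglyMeasurable_tsum_of_ae_summable {α ι E : Type*} [MeasurableSpace α]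
    {μ : Measure α} [Countable ι] [AddCommMonoid E] [TopologicalSpace E] [ContinuousAdd E]
    [TopologicalSpace.PseudoMetrizableSpace E] {f : ι → α → E}
    (hf : ∀ i, AEStronglyMeasurable (f i) μ) (hs : ∀ᵐ x ∂μ, Summable fun i ↦ f i x) :
    AEStronglyMeasurable (fun x ↦ ∑' i, f i x) μ :=
  aestronglyMeasurable_of_tendsto_ae (SummationFilter.unconditional ι).filter
    (fun s ↦ Finset.aestronglyMeasurable_fun_sum s fun i _ ↦ hf i)
    (hs.mono fun _ h ↦ h.hasSum)

theorem MeasureTheory.tendsto_lintegral_tsub_natCast {α : Type*} [MeasurableSpace α]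
    {μ : Measure α} {u : α → ℝ≥0∞} (hu : AEMeasurable u μ) (hfin : ∫⁻ x, u x ∂μ ≠ ⊤) :
    Tendsto (fun m : ℕ ↦ ∫⁻ x, u x - m ∂μ) atTop (𝓝 0) := by
  simpa using tendsto_lintegral_of_dominated_convergence' (f := 0) u
    (fun _ ↦ hu.sub aemeasurable_const) (fun _ ↦ ae_of_all _ fun _ ↦ tsub_le_self) hfin <| by
      filter_upwards [ae_lt_top' hu hfin] with x hx
      obtain ⟨N, hN⟩ := ENNReal.exists_nat_gt hx.ne
      exact tendsto_atTop_of_eventually_const (i₀ := N) fun m hm ↦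
        tsub_eq_zero_of_le (hN.le.trans (by exact_mod_cast hm : (N : ℝ≥0∞) ≤ m))

theorem ENNReal.tsum_ofReal_sub_succ_le {a : ℕ → ℝ} (ha : Antitone a) (h0 : ∀ n, 0 ≤ a n) :
    ∑' n, ENNReal.ofReal (a n - a (n + 1)) ≤ ENNReal.ofReal (a 0) := by
  refine ENNReal.tsum_le_of_sum_range_le fun N ↦ ?_
  rw [← ENNReal.ofReal_sum_of_nonneg fun n _ ↦ sub_nonneg.2 (ha n.le_succ),
    Finset.sum_range_sub']
  exact ENNReal.ofReal_le_ofReal (sub_le_self _ (h0 N))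

lemma one_div_sq_sub_one_eq {d : ℝ} (h1 : 0 < d - 1) :
    1 / (d ^ 2 - 1) = 1 / (2 * (d - 1)) - 1 / (2 * (d + 1)) := by
  rw [show d ^ 2 - 1 = (d - 1) * (d + 1) by ring]
  have : d + 1 ≠ 0 := by linarith
  field_simp
  ring

lemma one_lt_abs_add_two_mul {x : ℝ} (hx : x ∈ Ioo (-1 : ℝ) 1) {j : ℤ} (hj : j ≠ 0) :
    1 < |x + 2 * j| := by
  have hj1 : (1 : ℝ) ≤ |(j : ℝ)| := by exact_mod_cast Int.one_le_abs hj
  have := abs_sub_abs_le_abs_add (2 * (j : ℝ)) x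
  rw [abs_mul, abs_two, add_comm] at this
  linarith [abs_lt.2 hx]

namespace Subtransfer

noncomputable def branch (β : ℝ) (j : ℤ) (x : ℝ) : ℝ := -β / (x + 2 * j)

variable {β : ℝ} {j k : ℤ} {x y : ℝ}

lemma add_two_mul_ne_zero (hx : x ∈ Ioo (-1 : ℝ) 1) (hj : j ≠ 0) : x + 2 * j ≠ 0 :=
  abs_pos.1 (one_pos.trans (one_lt_abs_add_two_mul hx hj))

lemma branch_mem_Ioo (hβ : 0 < β) (hx : x ∈ Ioo (-1 : ℝ) 1) (hj : j ≠ 0) :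
    branch β j x ∈ Ioo (-β) β := by
  rw [mem_Ioo, ← abs_lt, branch, abs_div, abs_neg, abs_of_pos hβ]
  exact div_lt_self hβ (one_lt_abs_add_two_mul hx hj)

@[fun_prop]
lemma measurable_branch : Measurable (branch β j) :=
  measurable_const.div (measurable_id.add_const _)

lemma hasDerivAt_branch (hx : x + 2 * j ≠ 0) :
    HasDerivAt (branch β j) (β / (x + 2 * j) ^ 2) x := by
  have h := (((hasDerivAt_id' x).add_const (2 * (j : ℝ))).fun_inv hx).const_mul (-β)
  rw [show β / (x + 2 * j) ^ 2 = -β * (-1 / (x + 2 * j) ^ 2) by ring]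
  exact h

lemma add_two_mul_eq_of_branch_eq (hβ : β ≠ 0) (hx : x + 2 * j ≠ 0) (hy : y + 2 * k ≠ 0)
    (h : branch β j x = branch β k y) : x + 2 * j = y + 2 * k := by
  rw [branch, branch, div_eq_div_iff hx hy] at h
  exact (mul_left_cancel₀ (neg_ne_zero.2 hβ) h).symm

lemma injOn_branch (hβ : β ≠ 0) (hj : j ≠ 0) : InjOn (branch β j) (Ioo (-1) 1) :=
  fun x hx y hy h ↦ by
    simpa using add_two_mul_eq_of_branch_eq hβ (add_two_mul_ne_zero hx hj)
      (add_two_mul_ne_zero hy hj) h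

lemma pairwise_disjoint_image_branch (hβ : β ≠ 0) :
    Pairwise (Function.onFun Disjoint fun j : {j : ℤ // j ≠ 0} ↦ branch β j '' Ioo (-1) 1) := by
  rintro j k hjk
  refine Set.disjoint_left.2 ?_
  rintro _ ⟨x, hx, rfl⟩ ⟨y, hy, hxy⟩
  have h := add_two_mul_eq_of_branch_eq hβ (add_two_mul_ne_zero hy k.2)
    (add_two_mul_ne_zero hx j.2) hxy
  have hkj : (k - j : ℤ) < 1 := by
    exact_mod_cast (by push_cast; linarith [hx.2, hy.1] : ((k - j : ℤ) : ℝ) < 1)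
  have hjk' : (j - k : ℤ) < 1 := by
    exact_mod_cast (by push_cast; linarith [hx.1, hy.2] : ((j - k : ℤ) : ℝ) < 1)
  exact hjk (Subtype.ext (by omega))

lemma measurableSet_image_branch (hβ : β ≠ 0) (hj : j ≠ 0) :
    MeasurableSet (branch β j '' Ioo (-1) 1) :=
  measurableSet_Ioo.image_of_continuousOn_injOn
    (fun _ hx ↦ (hasDerivAt_branch (add_two_mul_ne_zero hx hj)).continuousAt.continuousWithinAt)
    (injOn_branch hβ hj)

lemma lintegral_deriv_mul_comp_branch (hβ : β ≠ 0) (hj : j ≠ 0) (u : ℝ → ℝ≥0∞) :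
    ∫⁻ x in Ioo (-1) 1, ‖β / (x + 2 * j) ^ 2‖ₑ * u (branch β j x) =
      ∫⁻ y in branch β j '' Ioo (-1) 1, u y := by
  simp_rw [lintegral_image_eq_lintegral_abs_deriv_mul measurableSet_Ioo
    (fun x hx ↦ (hasDerivAt_branch (add_two_mul_ne_zero hx hj)).hasDerivWithinAt)
    (injOn_branch hβ hj), Real.enorm_eq_ofReal_abs]

lemma quasiMeasurePreserving_branch (hβ : 0 < β) (hj : j ≠ 0) :
    Measure.QuasiMeasurePreserving (branch β j) (volume.restrict (Ioo (-1) 1))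
      (volume.restrict (Ioo (-β) β)) := by
  refine ⟨measurable_branch, Measure.AbsolutelyContinuous.mk fun s hs hs0 ↦ ?_⟩
  rw [Measure.map_apply measurable_branch hs, measure_eq_zero_iff_ae_notMem]
  have h0 : ∫⁻ x in Ioo (-1) 1, ‖β / (x + 2 * j) ^ 2‖ₑ * s.indicator 1 (branch β j x) = 0 := by
    rw [lintegral_deriv_mul_comp_branch hβ.ne' hj, ← nonpos_iff_eq_zero, ← hs0,
      ← lintegral_indicator_one hs]
    exact lintegral_mono_set (image_subset_iff.2 fun x hx ↦ branch_mem_Ioo hβ hx hj)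
  rw [lintegral_eq_zero_iff (by fun_prop)] at h0
  filter_upwards [h0, ae_restrict_mem measurableSet_Ioo] with x hx hxI hxs
  have hd := add_two_mul_ne_zero hxI hj
  simp [hβ.ne', hd] at hx
  exact hx hxs

noncomputable def majorant (β : ℝ) : Module.End ℝ≥0∞ (ℝ → ℝ≥0∞) where
  toFun u x := ∑' j : {j : ℤ // j ≠ 0}, ‖β / (x + 2 * (j : ℝ)) ^ 2‖ₑ * u (branch β j x)
  map_add' u v := funext fun x ↦ by simp only [Pi.add_apply, mul_add, ENNReal.tsum_add]
  map_smul' c u := funext fun x ↦ by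
    simp only [Pi.smul_apply, smul_eq_mul, RingHom.id_apply, ← ENNReal.tsum_mul_left,
      mul_left_comm]

lemma majorant_apply (u : ℝ → ℝ≥0∞) (x : ℝ) :
    majorant β u x =
      ∑' j : {j : ℤ // j ≠ 0}, ‖β / (x + 2 * (j : ℝ)) ^ 2‖ₑ * u (branch β j x) :=
  rfl

lemma majorant_mono : Monotone (majorant β) :=
  fun _ _ h _ ↦ ENNReal.tsum_le_tsum fun _ ↦ mul_le_mul_right (h _) _

lemma majorant_le_majorant_of_le_on {u v : ℝ → ℝ≥0∞} (hβ : 0 < β)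
    (h : ∀ y ∈ Ioo (-β) β, u y ≤ v y) (hx : x ∈ Ioo (-1 : ℝ) 1) :
    majorant β u x ≤ majorant β v x :=
  ENNReal.tsum_le_tsum fun j ↦ mul_le_mul_right (h _ (branch_mem_Ioo hβ hx j.2)) _

lemma enorm_Tsub_le_majorant (f : ℝ → ℝ) (x : ℝ) :
    ‖Tsub β f x‖ₑ ≤ majorant β (‖f ·‖ₑ) x :=
  enorm_tsum_le_tsum_enorm.trans_eq (tsum_congr fun _ ↦ enorm_mul _ _)

lemma enorm_iterate_Tsub_le (f : ℝ → ℝ) (n : ℕ) (x : ℝ) :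
    ‖(Tsub β)^[n] f x‖ₑ ≤ (majorant β ^ n) (‖f ·‖ₑ) x := by
  induction n generalizing x with
  | zero => rfl
  | succ n ih =>
    rw [Function.iterate_succ_apply', pow_succ', Module.End.mul_apply]
    exact (enorm_Tsub_le_majorant _ x).trans (majorant_mono (fun y ↦ ih y) x)

lemma aemeasurable_majorant {u : ℝ → ℝ≥0∞} (hβ0 : 0 < β) (hβ1 : β ≤ 1)
    (hu : AEMeasurable u (volume.restrict (Ioo (-1) 1))) :
    AEMeasurable (majorant β u) (volume.restrict (Ioo (-1) 1)) := by
  have hu' := hu.mono_measure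
    (Measure.restrict_mono (Ioo_subset_Ioo (neg_le_neg hβ1) hβ1) le_rfl)
  exact AEMeasurable.tsum fun j ↦ (by fun_prop : Measurable fun x : ℝ ↦
    ‖β / (x + 2 * (j : ℝ)) ^ 2‖ₑ).aemeasurable.mul
      (hu'.comp_quasiMeasurePreserving (quasiMeasurePreserving_branch hβ0 j.2))

lemma aemeasurable_pow_majorant {u : ℝ → ℝ≥0∞} (hβ0 : 0 < β) (hβ1 : β ≤ 1)
    (hu : AEMeasurable u (volume.restrict (Ioo (-1) 1))) (n : ℕ) :
    AEMeasurable ((majorant β ^ n) u) (volume.restrict (Ioo (-1) 1)) := by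
  induction n with
  | zero => exact hu
  | succ n ih => rw [pow_succ', Module.End.mul_apply]; exact aemeasurable_majorant hβ0 hβ1 ih

lemma lintegral_majorant_le {u : ℝ → ℝ≥0∞} (hβ : 0 < β)
    (hu : AEMeasurable u (volume.restrict (Ioo (-β) β))) :
    ∫⁻ x in Ioo (-1) 1, majorant β u x ≤ ∫⁻ y in Ioo (-β) β, u y :=
  calc ∫⁻ x in Ioo (-1) 1, majorant β u x
      = ∑' j : {j : ℤ // j ≠ 0},
          ∫⁻ x in Ioo (-1) 1, ‖β / (x + 2 * (j : ℝ)) ^ 2‖ₑ * u (branch β j x) :=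
        lintegral_tsum fun j ↦ (by fun_prop : Measurable fun x : ℝ ↦
          ‖β / (x + 2 * (j : ℝ)) ^ 2‖ₑ).aemeasurable.mul
            (hu.comp_quasiMeasurePreserving (quasiMeasurePreserving_branch hβ j.2))
    _ = ∫⁻ y in ⋃ j : {j : ℤ // j ≠ 0}, branch β j '' Ioo (-1) 1, u y := by
        rw [lintegral_iUnion (fun j ↦ measurableSet_image_branch hβ.ne' j.2)
          (pairwise_disjoint_image_branch hβ.ne')]
        exact tsum_congr fun j ↦ lintegral_deriv_mul_comp_branch hβ.ne' j.2 u
    _ ≤ ∫⁻ y in Ioo (-β) β, u y := lintegral_mono_set <| iUnion_subset fun j ↦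
        image_subset_iff.2 fun _ hx ↦ branch_mem_Ioo hβ hx j.2

lemma lintegral_majorant_le_self {u : ℝ → ℝ≥0∞} (hβ0 : 0 < β) (hβ1 : β ≤ 1)
    (hu : AEMeasurable u (volume.restrict (Ioo (-1) 1))) :
    ∫⁻ x in Ioo (-1) 1, majorant β u x ≤ ∫⁻ x in Ioo (-1) 1, u x :=
  have hsub : Ioo (-β) β ⊆ Ioo (-1) 1 := Ioo_subset_Ioo (neg_le_neg hβ1) hβ1
  (lintegral_majorant_le hβ0 (hu.mono_measure (Measure.restrict_mono hsub le_rfl))).trans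
    (lintegral_mono_set hsub)

lemma lintegral_pow_majorant_le_self {u : ℝ → ℝ≥0∞} (hβ0 : 0 < β) (hβ1 : β ≤ 1)
    (hu : AEMeasurable u (volume.restrict (Ioo (-1) 1))) (n : ℕ) :
    ∫⁻ x in Ioo (-1) 1, (majorant β ^ n) u x ≤ ∫⁻ x in Ioo (-1) 1, u x := by
  induction n with
  | zero => rfl
  | succ n ih =>
    rw [pow_succ', Module.End.mul_apply]
    exact (lintegral_majorant_le_self hβ0 hβ1 (aemeasurable_pow_majorant hβ0 hβ1 hu n)).trans ih

lemma tsum_ofReal_one_div_sq_sub_one_le (hx : x ∈ Ioo (-1 : ℝ) 1) :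
    ∑' j : {j : ℤ // j ≠ 0}, ENNReal.ofReal (1 / ((x + 2 * (j : ℝ)) ^ 2 - 1)) ≤
      ENNReal.ofReal (1 / (1 - x ^ 2)) := by
  obtain ⟨hx1, hx2⟩ := hx
  set g : ℤ → ℝ≥0∞ := fun j ↦ ENNReal.ofReal (1 / ((x + 2 * (j : ℝ)) ^ 2 - 1))
  have hg0 : g 0 = 0 := ENNReal.ofReal_of_nonpos <| one_div_nonpos.2 (by push_cast; nlinarith)
  set a : ℕ → ℝ := fun n ↦ 1 / (2 * (x + 2 * n + 1))
  set b : ℕ → ℝ := fun n ↦ 1 / (2 * (2 * n + 1 - x))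
  have hpos (n : ℕ) : g (n + 1) = ENNReal.ofReal (a n - a (n + 1)) := by
    have := one_div_sq_sub_one_eq (d := x + 2 * (n + 1)) (by linarith [n.cast_nonneg (α := ℝ)])
    simp only [g, a]
    push_cast
    rw [this]
    ring_nf
  have hneg (n : ℕ) : g (-(n + 1)) = ENNReal.ofReal (b n - b (n + 1)) := by
    have := one_div_sq_sub_one_eq (d := 2 * (n + 1) - x) (by linarith [n.cast_nonneg (α := ℝ)])
    simp only [g, b]
    push_cast
    rw [show (x + 2 * -((n : ℝ) + 1)) ^ 2 = (2 * (n + 1) - x) ^ 2 by ring, this]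
    ring_nf
  have ha0 (n : ℕ) : 0 ≤ a n := one_div_nonneg.2 (by linarith [n.cast_nonneg (α := ℝ)])
  have hb0 (n : ℕ) : 0 ≤ b n := one_div_nonneg.2 (by linarith [n.cast_nonneg (α := ℝ)])
  have ha : Antitone a := fun m n hmn ↦ by
    have : (m : ℝ) ≤ n := by exact_mod_cast hmn
    simp only [a]
    gcongr
    linarith [m.cast_nonneg (α := ℝ)]
  have hb : Antitone b := fun m n hmn ↦ by
    have : (m : ℝ) ≤ n := by exact_mod_cast hmn
    simp only [b]
    gcongr
    linarith [m.cast_nonneg (α := ℝ)]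
  calc ∑' j : {j : ℤ // j ≠ 0}, g j
      = ∑' j, g j :=
        tsum_subtype_eq_of_support_subset (s := {j | j ≠ 0}) fun j hj h ↦ hj (h ▸ hg0)
    _ = ∑' n : ℕ, g (n + 1) + ∑' n : ℕ, g (-(n + 1)) := by
        rw [tsum_of_nat_of_neg_add_one ENNReal.summable ENNReal.summable,
          tsum_eq_zero_add' ENNReal.summable]
        simp [hg0]
    _ ≤ ENNReal.ofReal (a 0) + ENNReal.ofReal (b 0) := by
        simp only [hpos, hneg]
        exact add_le_add (ENNReal.tsum_ofReal_sub_succ_le ha ha0)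
          (ENNReal.tsum_ofReal_sub_succ_le hb hb0)
    _ = ENNReal.ofReal (1 / (1 - x ^ 2)) := by
        rw [← ENNReal.ofReal_add (ha0 0) (hb0 0)]
        congr 1
        have : x + 1 ≠ 0 := by linarith
        have : 1 - x ≠ 0 := by linarith
        simp only [a, b, Nat.cast_zero, mul_zero, add_zero, zero_add]
        rw [show 1 - x ^ 2 = (x + 1) * (1 - x) by ring]
        field_simp
        ring

noncomputable def psi (t : ℝ) : ℝ≥0∞ := ENNReal.ofReal (1 / (1 - t ^ 2))

@[fun_prop]
lemma measurable_psi : Measurable psi := by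
  unfold psi
  fun_prop

lemma one_le_psi (hx : x ∈ Ioo (-1 : ℝ) 1) : 1 ≤ psi x := by
  rw [psi, ← ENNReal.ofReal_one]
  refine ENNReal.ofReal_le_ofReal ((le_div_iff₀ ?_).2 ?_) <;> nlinarith [hx.1, hx.2, sq_nonneg x]

lemma setLIntegral_psi_lt_top (hβ : β < 1) : ∫⁻ y in Ioo (-β) β, psi y < ⊤ :=
  setLIntegral_lt_top_of_le_nnreal measure_Ioo_lt_top.ne
    ⟨(1 / (1 - β ^ 2)).toNNReal, fun y hy ↦ by
      show psi y ≤ ENNReal.ofReal (1 / (1 - β ^ 2))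
      have : y ^ 2 < β ^ 2 := sq_lt_sq' hy.1 hy.2
      exact ENNReal.ofReal_le_ofReal
        (one_div_le_one_div_of_le (by nlinarith [hy.1, hy.2]) (by linarith))⟩

lemma majorant_psi_le (hβ0 : 0 ≤ β) (hβ1 : β ≤ 1) (hx : x ∈ Ioo (-1 : ℝ) 1) :
    majorant β psi x ≤ ENNReal.ofReal β * psi x := by
  calc majorant β psi x
      ≤ ∑' j : {j : ℤ // j ≠ 0},
          ENNReal.ofReal β * ENNReal.ofReal (1 / ((x + 2 * (j : ℝ)) ^ 2 - 1)) := by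
        refine ENNReal.tsum_le_tsum fun j ↦ ?_
        set d := x + 2 * ((j : ℤ) : ℝ)
        have hd : 1 < d ^ 2 := one_lt_sq_iff_one_lt_abs _ |>.2 (one_lt_abs_add_two_mul hx j.2)
        rw [Real.enorm_of_nonneg (by positivity), psi, branch,
          ← ENNReal.ofReal_mul (by positivity), ← ENNReal.ofReal_mul hβ0]
        refine ENNReal.ofReal_le_ofReal ?_
        rw [show β / d ^ 2 * (1 / (1 - (-β / d) ^ 2)) = β / (d ^ 2 - β ^ 2) by
          have : d ^ 2 - β ^ 2 ≠ 0 := by nlinarith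
          have : d ≠ 0 := by rintro h; norm_num [h] at hd
          field_simp, mul_one_div]
        exact div_le_div_of_nonneg_left hβ0 (by linarith) (by nlinarith)
    _ = ENNReal.ofReal β * ∑' j : {j : ℤ // j ≠ 0},
          ENNReal.ofReal (1 / ((x + 2 * (j : ℝ)) ^ 2 - 1)) := ENNReal.tsum_mul_left
    _ ≤ ENNReal.ofReal β * psi x := mul_le_mul_right (tsum_ofReal_one_div_sq_sub_one_le hx) _

lemma pow_majorant_le_of_le_mul_psi {v : ℝ → ℝ≥0∞} {c : ℝ≥0∞} (hβ0 : 0 < β) (hβ1 : β ≤ 1)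
    (hv : ∀ y ∈ Ioo (-1 : ℝ) 1, v y ≤ c * psi y) (n : ℕ) (hx : x ∈ Ioo (-1 : ℝ) 1) :
    (majorant β ^ n) v x ≤ c * ENNReal.ofReal β ^ n * psi x := by
  induction n generalizing x with
  | zero => simpa using hv x hx
  | succ n ih =>
    rw [pow_succ', Module.End.mul_apply]
    calc majorant β ((majorant β ^ n) v) x
        ≤ majorant β ((c * ENNReal.ofReal β ^ n) • psi) x :=
          majorant_le_majorant_of_le_on hβ0
            (fun y hy ↦ ih (Ioo_subset_Ioo (neg_le_neg hβ1) hβ1 hy)) hx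
      _ = c * ENNReal.ofReal β ^ n * majorant β psi x := by rw [map_smul]; rfl
      _ ≤ c * ENNReal.ofReal β ^ n * (ENNReal.ofReal β * psi x) :=
          mul_le_mul_right (majorant_psi_le hβ0.le hβ1 hx) _
      _ = c * ENNReal.ofReal β ^ (n + 1) * psi x := by ring

lemma lintegral_pow_succ_majorant_le_of_le {v : ℝ → ℝ≥0∞} {m : ℝ≥0∞} (hβ0 : 0 < β)
    (hβ1 : β ≤ 1) (hv : ∀ y ∈ Ioo (-1 : ℝ) 1, v y ≤ m) (n : ℕ) :
    ∫⁻ x in Ioo (-1) 1, (majorant β ^ (n + 1)) v x ≤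
      m * ENNReal.ofReal β ^ n * ∫⁻ y in Ioo (-β) β, psi y := by
  have hv' (y) (hy : y ∈ Ioo (-1 : ℝ) 1) : v y ≤ m * psi y :=
    (hv y hy).trans (le_mul_of_one_le_right' (one_le_psi hy))
  calc ∫⁻ x in Ioo (-1) 1, (majorant β ^ (n + 1)) v x
      ≤ ∫⁻ x in Ioo (-1) 1, majorant β ((m * ENNReal.ofReal β ^ n) • psi) x := by
        refine setLIntegral_mono' measurableSet_Ioo fun x hx ↦ ?_
        rw [pow_succ', Module.End.mul_apply]
        exact majorant_le_majorant_of_le_on hβ0 (fun y hy ↦ pow_majorant_le_of_le_mul_psi hβ0 hβ1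
          hv' n (Ioo_subset_Ioo (neg_le_neg hβ1) hβ1 hy)) hx
    _ = m * ENNReal.ofReal β ^ n * ∫⁻ x in Ioo (-1) 1, majorant β psi x := by
        rw [map_smul]
        exact lintegral_const_mul'' _ (aemeasurable_majorant hβ0 hβ1 measurable_psi.aemeasurable)
    _ ≤ m * ENNReal.ofReal β ^ n * ∫⁻ y in Ioo (-β) β, psi y :=
        mul_le_mul_right (lintegral_majorant_le hβ0 measurable_psi.aemeasurable) _

theorem tendsto_lintegral_pow_majorant {u : ℝ → ℝ≥0∞} (hβ0 : 0 < β) (hβ1 : β < 1)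
    (hu : AEMeasurable u (volume.restrict (Ioo (-1) 1)))
    (hfin : ∫⁻ x in Ioo (-1) 1, u x ≠ ⊤) :
    Tendsto (fun n ↦ ∫⁻ x in Ioo (-1) 1, (majorant β ^ n) u x) atTop (𝓝 0) := by
  rw [← tendsto_add_atTop_iff_nat 1, ENNReal.tendsto_nhds_zero]
  intro ε hε
  have hε2 : 0 < ε / 2 := ENNReal.half_pos hε.ne'
  obtain ⟨m, hm⟩ :=
    (ENNReal.tendsto_nhds_zero.1 (tendsto_lintegral_tsub_natCast hu hfin) _ hε2).exists
  have hgeom : Tendsto (fun n : ℕ ↦ (m : ℝ≥0∞) * ENNReal.ofReal β ^ n *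
      ∫⁻ y in Ioo (-β) β, psi y) atTop (𝓝 0) := by
    simpa using ENNReal.Tendsto.mul_const (ENNReal.Tendsto.const_mul
      (ENNReal.tendsto_pow_atTop_nhds_zero_of_lt_one (ENNReal.ofReal_lt_one.2 hβ1))
      (Or.inr (ENNReal.natCast_ne_top m))) (Or.inr (setLIntegral_psi_lt_top hβ1).ne)
  filter_upwards [ENNReal.tendsto_nhds_zero.1 hgeom _ hε2] with n hn
  set v : ℝ → ℝ≥0∞ := fun x ↦ min (u x) m
  set w : ℝ → ℝ≥0∞ := fun x ↦ u x - m
  have hsplit : u = v + w := funext fun x ↦ (add_comm _ _).trans tsub_add_min |>.symm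
  have hw : AEMeasurable w (volume.restrict (Ioo (-1) 1)) := hu.sub aemeasurable_const
  calc ∫⁻ x in Ioo (-1) 1, (majorant β ^ (n + 1)) u x
      = (∫⁻ x in Ioo (-1) 1, (majorant β ^ (n + 1)) v x) +
          ∫⁻ x in Ioo (-1) 1, (majorant β ^ (n + 1)) w x := by
        rw [hsplit, map_add]
        exact lintegral_add_left'
          (aemeasurable_pow_majorant hβ0 hβ1.le (hu.min aemeasurable_const) _) _
    _ ≤ ε / 2 + ε / 2 := add_le_add
        ((lintegral_pow_succ_majorant_le_of_le hβ0 hβ1.le (fun y _ ↦ min_le_right _ _) n).trans hn)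
        ((lintegral_pow_majorant_le_self hβ0 hβ1.le hw _).trans hm)
    _ = ε := ENNReal.add_halves ε

lemma aestronglyMeasurable_Tsub {f : ℝ → ℝ} (hβ : 0 < β)
    (hf : AEStronglyMeasurable f (volume.restrict (Ioo (-β) β)))
    (hfin : ∀ᵐ x ∂volume.restrict (Ioo (-1) 1), majorant β (‖f ·‖ₑ) x ≠ ⊤) :
    AEStronglyMeasurable (Tsub β f) (volume.restrict (Ioo (-1) 1)) :=
  aestronglyMeasurable_tsum_of_ae_summable
    (fun j ↦ (by fun_prop : Measurable fun x : ℝ ↦ β / (x + 2 * (j : ℝ)) ^ 2)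
      |>.aestronglyMeasurable.mul
        (hf.comp_quasiMeasurePreserving (quasiMeasurePreserving_branch hβ j.2)))
    (hfin.mono fun _ hx ↦ (tsum_enorm_ne_top_iff_summable_norm.1
      (by simpa only [majorant_apply, branch, enorm_mul] using hx)).of_norm)

lemma lintegral_enorm_Tsub_le {f : ℝ → ℝ} (hβ0 : 0 < β) (hβ1 : β ≤ 1)
    (hf : AEStronglyMeasurable f (volume.restrict (Ioo (-1) 1))) :
    ∫⁻ x in Ioo (-1) 1, ‖Tsub β f x‖ₑ ≤ ∫⁻ x in Ioo (-1) 1, ‖f x‖ₑ :=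
  (lintegral_mono fun x ↦ enorm_Tsub_le_majorant f x).trans
    (lintegral_majorant_le_self hβ0 hβ1 hf.enorm)

lemma integrableOn_Tsub {f : ℝ → ℝ} (hβ0 : 0 < β) (hβ1 : β ≤ 1)
    (hf : IntegrableOn f (Ioo (-1) 1)) : IntegrableOn (Tsub β f) (Ioo (-1) 1) := by
  have hfin := ae_lt_top' (aemeasurable_majorant hβ0 hβ1 hf.1.enorm)
    ((lintegral_majorant_le_self hβ0 hβ1 hf.1.enorm).trans_lt hf.2).ne
  exact ⟨aestronglyMeasurable_Tsub hβ0
    (hf.1.mono_measure (Measure.restrict_mono (Ioo_subset_Ioo (neg_le_neg hβ1) hβ1) le_rfl))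
    (hfin.mono fun _ h ↦ h.ne), (lintegral_enorm_Tsub_le hβ0 hβ1 hf.1).trans_lt hf.2⟩

end Subtransfer

/-- For `0 < β < 1`, the subtransfer operator `T_β` maps `L¹(I₁)` contractively into itself,
and the `L¹(I₁)`-norms of the iterates `T_β^N f` tend to `0`. -/
theorem subtransfer_contracts_and_iterates_tend_to_zero
    (β : ℝ) (hβ0 : 0 < β) (hβ1 : β < 1) (f : ℝ → ℝ)
    (hf : IntegrableOn f (Ioo (-1) 1)) :
    IntegrableOn (Tsub β f) (Ioo (-1) 1) ∧
    (∫ x in Ioo (-1 : ℝ) 1, |Tsub β f x|) ≤ (∫ x in Ioo (-1 : ℝ) 1, |f x|) ∧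
    Tendsto (fun N : ℕ => ∫ x in Ioo (-1 : ℝ) 1, |(Tsub β)^[N] f x|) atTop (nhds 0) := by
  have hcontract {g : ℝ → ℝ} := Subtransfer.integrableOn_Tsub (f := g) hβ0 hβ1.le
  have hiter (N : ℕ) : IntegrableOn ((Tsub β)^[N] f) (Ioo (-1) 1) := by
    induction N with
    | zero => exact hf
    | succ N ih => rw [Function.iterate_succ_apply']; exact hcontract ih
  have habs {g : ℝ → ℝ} (hg : IntegrableOn g (Ioo (-1) 1)) :
      ∫ x in Ioo (-1 : ℝ) 1, |g x| = (∫⁻ x in Ioo (-1) 1, ‖g x‖ₑ).toReal := by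
    simpa only [Real.norm_eq_abs] using integral_norm_eq_lintegral_enorm hg.1
  refine ⟨hcontract hf, ?_, ?_⟩
  · rw [habs (hcontract hf), habs hf]
    exact ENNReal.toReal_mono hf.2.ne (Subtransfer.lintegral_enorm_Tsub_le hβ0 hβ1.le hf.1)
  · have hdecay : Tendsto (fun N ↦ ∫⁻ x in Ioo (-1) 1, ‖(Tsub β)^[N] f x‖ₑ) atTop (𝓝 0) :=
      tendsto_of_tendsto_of_tendsto_of_le_of_le tendsto_const_nhds
        (Subtransfer.tendsto_lintegral_pow_majorant hβ0 hβ1 hf.1.enorm hf.2.ne) (fun _ ↦ bot_le)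
        fun N ↦ lintegral_mono (Subtransfer.enorm_iterate_Tsub_le f N)
    have := (ENNReal.tendsto_toReal ENNReal.zero_ne_top).comp hdecay
    rw [ENNReal.toReal_zero] at this
    exact this.congr fun N ↦ (habs (hiter N)).symm
end

section
/- Fix 0 < β ≤ 1 and let κ_α(x) := α/(α²−x²). Then: (a) for every x ∈ (−1,1) the series ∑_{j∈ℤ, j≠0} (β/(x+2j)²)·κ_β(−β/(x+2j)) converges absolutely and equals κ₁(x) = 1/(1−x²), i.e. T_β κ_β = κ₁ on (−1,1); (b) for every n ≥ 1 and every x ∈ (−1,1), 0 ≤ (T_β^n κ₁)(x) ≤ β^n·κ₁(x) = β^n/(1−x²); (c) if moreover 0 < β < 1, then (T_β^n κ₁)(x) ≤ 2β^n/(1−β) for all x ∈ (−1,1) and n ≥ 1. -/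
/-!
At `q = x + 2j` the summand of `T_β κ_β` is `1/(q² - 1) = (1/(q - 1) - 1/(q + 1))/2`, so
the sums over `j > 0` and `j < 0` telescope to `1/(2(1 + x))` and `1/(2(1 - x))`: this is (a).
All the points `-β/(x + 2j)` lie in `(-β, β)`, where `κ₁ ≤ β κ_β`; as `T_β` is positive, (a)
gives `T_β (β^n κ₁) ≤ β^(n+1) κ₁`, and (b) follows by induction. For (c), (b) bounds
`T_β^(n-1) κ₁` on `(-β, β)` by the constant `β^(n-1)/(1 - β²)`, which `T_β` maps to at most
`2β^n/(1 - β²)` because `∑_{j ≠ 0} (x + 2j)⁻² ≤ 2` uniformly on `(-1, 1)`.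
-/

open MeasureTheory Set Filter

/-- `κ_α(x) = α/(α² - x²)`. -/
noncomputable def kap (α x : ℝ) : ℝ := α / (α ^ 2 - x ^ 2)

open Topology

theorem hasSum_sub_succ_of_antitone {g : ℕ → ℝ} (hg : Antitone g)
    (hlim : Tendsto g atTop (𝓝 0)) : HasSum (fun n => g n - g (n + 1)) (g 0) := by
  rw [hasSum_iff_tendsto_nat_of_nonneg fun n => sub_nonneg.2 (hg n.le_succ)]
  simp_rw [Finset.sum_range_sub']
  simpa using tendsto_const_nhds.sub hlim

theorem hasSum_one_div_mul_add_two {c : ℝ} (hc : 0 < c) :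
    HasSum (fun n : ℕ => 1 / ((c + 2 * n) * (c + 2 * n + 2))) (1 / (2 * c)) := by
  have hg : Antitone fun n : ℕ => (2 * c + 4 * n)⁻¹ :=
    antitone_nat_of_succ_le fun n => inv_anti₀ (by positivity) (by push_cast; linarith)
  have hlim : Tendsto (fun n : ℕ => (2 * c + 4 * n)⁻¹) atTop (𝓝 0) :=
    (tendsto_atTop_add_const_left _ _
      (tendsto_natCast_atTop_atTop.const_mul_atTop (by norm_num))).inv_tendsto_atTop
  convert hasSum_sub_succ_of_antitone hg hlim using 1
  · ext n
    push_cast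
    field_simp
    ring
  · simp [one_div, mul_comm]

theorem HasSum.subtype_ne_zero_of_add_one_of_neg_add_one {M : Type*} [AddCommMonoid M]
    [TopologicalSpace M] [ContinuousAdd M] {f : ℤ → M} {a b : M}
    (ha : HasSum (fun n : ℕ => f (n + 1)) a) (hb : HasSum (fun n : ℕ => f (-(n + 1))) b) :
    HasSum (fun j : {j : ℤ // j ≠ 0} => f j) (a + b) := by
  classical
  have := HasSum.of_add_one_of_neg_add_one (f := fun j => if j = 0 then 0 else f j)
    (by convert ha using 2 with n; exact if_neg (by omega))
    (by convert hb using 2 with n; exact if_neg (by omega))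
  rw [if_pos rfl, add_zero] at this
  exact (hasSum_subtype_iff_indicator (s := {j : ℤ | j ≠ 0})).2 (by
    convert this using 2 with j; by_cases hj : j = 0 <;> simp [hj])

theorem hasSum_comp_sq_add_two_mul {M : Type*} [AddCommMonoid M] [TopologicalSpace M]
    [ContinuousAdd M] {φ : ℝ → M} {x : ℝ} {a b : M}
    (ha : HasSum (fun n : ℕ => φ ((x + 2 * (n + 1)) ^ 2)) a)
    (hb : HasSum (fun n : ℕ => φ ((-x + 2 * (n + 1)) ^ 2)) b) :
    HasSum (fun j : {j : ℤ // j ≠ 0} => φ ((x + 2 * j) ^ 2)) (a + b) := by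
  refine HasSum.subtype_ne_zero_of_add_one_of_neg_add_one
    (f := fun j : ℤ => φ ((x + 2 * j) ^ 2)) (by simpa using ha) ?_
  convert hb using 3 with n
  push_cast
  ring

namespace Subtransfer

variable {β q x y : ℝ}

theorem hasSum_inv_sq_sub_one_succ (hy : -1 < y) :
    HasSum (fun n : ℕ => 1 / ((y + 2 * (n + 1)) ^ 2 - 1)) (1 / (2 * (1 + y))) := by
  convert hasSum_one_div_mul_add_two (neg_lt_iff_pos_add'.1 hy) using 3 with n
  ring

theorem hasSum_inv_sq_sub_one (hx : x ∈ Ioo (-1 : ℝ) 1) :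
    HasSum (fun j : {j : ℤ // j ≠ 0} => 1 / ((x + 2 * j) ^ 2 - 1)) (1 / (1 - x ^ 2)) := by
  obtain ⟨hx₁, hx₂⟩ := hx
  convert hasSum_comp_sq_add_two_mul (φ := fun s => 1 / (s - 1))
    (hasSum_inv_sq_sub_one_succ hx₁) (hasSum_inv_sq_sub_one_succ (y := -x) (by linarith)) using 1
  have h₁ : 1 + x ≠ 0 := by linarith
  have h₂ : 1 + -x ≠ 0 := by linarith
  have h₃ : 1 - x ^ 2 ≠ 0 := by nlinarith
  field_simp
  ring

-- Unlike `1 / (q ^ 2 - 1)`, this comparison series telescopes along `q = y + 2(n+1)` to a sum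
-- that stays bounded as `y → -1`.
theorem one_div_sq_le_of_half_lt (hq : 1 / 2 < q) :
    1 / q ^ 2 ≤ 4 / 3 * (1 / ((q - 1 / 2) * (q + 3 / 2))) := by
  rw [← div_eq_mul_one_div, div_le_div_iff₀ (by positivity) (by nlinarith)]
  nlinarith [sq_nonneg (q - 3 / 2)]

theorem exists_hasSum_inv_sq_add_two_mul_succ_le (hy : -1 < y) :
    ∃ s ≤ 2 / (3 * (y + 3 / 2)), HasSum (fun n : ℕ => 1 / (y + 2 * (n + 1)) ^ 2) s := by
  have hg := (hasSum_one_div_mul_add_two (c := y + 3 / 2) (by linarith)).mul_left (4 / 3)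
  have hle (n : ℕ) : 1 / (y + 2 * (n + 1)) ^ 2
      ≤ 4 / 3 * (1 / ((y + 3 / 2 + 2 * n) * (y + 3 / 2 + 2 * n + 2))) := by
    convert one_div_sq_le_of_half_lt (q := y + 2 * (n + 1)) (by linarith [n.cast_nonneg (α := ℝ)])
      using 4 <;> ring
  have hf := Summable.of_nonneg_of_le (fun n => by positivity) hle hg.summable
  refine ⟨_, (hasSum_le hle hf.hasSum hg).trans_eq ?_, hf.hasSum⟩
  field_simp
  ring

theorem exists_hasSum_inv_sq_add_two_mul_le_two (hx : x ∈ Ioo (-1 : ℝ) 1) :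
    ∃ s ≤ 2, HasSum (fun j : {j : ℤ // j ≠ 0} => 1 / (x + 2 * j) ^ 2) s := by
  obtain ⟨hx₁, hx₂⟩ := hx
  obtain ⟨a, ha, hasum⟩ := exists_hasSum_inv_sq_add_two_mul_succ_le hx₁
  obtain ⟨b, hb, hbsum⟩ := exists_hasSum_inv_sq_add_two_mul_succ_le (y := -x) (by linarith)
  refine ⟨a + b, ?_, hasSum_comp_sq_add_two_mul (φ := fun s => 1 / s) hasum hbsum⟩
  have hsum : 2 / (3 * (x + 3 / 2)) + 2 / (3 * (-x + 3 / 2)) ≤ 2 := by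
    rw [div_add_div _ _ (by linarith) (by linarith), div_le_iff₀ (by nlinarith)]
    nlinarith
  linarith

theorem one_lt_sq_add_two_mul (hx : x ∈ Ioo (-1 : ℝ) 1) {j : ℤ} (hj : j ≠ 0) :
    1 < (x + 2 * j) ^ 2 := by
  obtain ⟨hx₁, hx₂⟩ := hx
  rcases (show j ≤ -1 ∨ 1 ≤ j by omega) with h | h
  · have : (j : ℝ) ≤ -1 := by exact_mod_cast h
    nlinarith
  · have : (1 : ℝ) ≤ j := by exact_mod_cast h
    nlinarith

theorem neg_div_mem_Ioo (hβ : 0 < β) (hx : x ∈ Ioo (-1 : ℝ) 1) {j : ℤ} (hj : j ≠ 0) :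
    -β / (x + 2 * j) ∈ Ioo (-β) β := by
  have hq := one_lt_sq_add_two_mul hx hj
  rw [one_lt_sq_iff_one_lt_abs] at hq
  rw [mem_Ioo, ← abs_lt, abs_div, abs_neg, abs_of_pos hβ, div_lt_iff₀ (by linarith)]
  nlinarith

theorem mul_kap_neg_div (hβ : β ≠ 0) (hq : q ≠ 0) :
    β / q ^ 2 * kap β (-β / q) = 1 / (q ^ 2 - 1) := by
  unfold kap
  rcases eq_or_ne (q ^ 2) 1 with h | h
  -- both sides are the junk value `x / 0 = 0`
  · simp [div_pow, h]
  · have : q ^ 2 - 1 ≠ 0 := sub_ne_zero.2 h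
    field_simp

theorem one_div_one_sub_sq_le_mul_kap (hβ1 : β ≤ 1) (hy : y ∈ Ioo (-β) β) :
    1 / (1 - y ^ 2) ≤ β * kap β y := by
  have hβ : 0 < β := by linarith [hy.1, hy.2]
  have hy2 : y ^ 2 < β ^ 2 := sq_lt_sq' hy.1 hy.2
  have hβ2 : β ^ 2 ≤ 1 := by nlinarith
  rw [kap, mul_div_assoc', ← sq, div_le_div_iff₀ (by linarith) (by linarith)]
  nlinarith [mul_nonneg (sq_nonneg y) (sub_nonneg.2 hβ2)]

noncomputable def tsubTerm (β : ℝ) (f : ℝ → ℝ) (x : ℝ) (j : {j : ℤ // j ≠ 0}) : ℝ :=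
  β / (x + 2 * ((j : ℤ) : ℝ)) ^ 2 * f (-β / (x + 2 * ((j : ℤ) : ℝ)))

theorem Tsub_eq_tsum (β : ℝ) (f : ℝ → ℝ) (x : ℝ) :
    Tsub β f x = ∑' j, tsubTerm β f x j := rfl

theorem tsubTerm_const_mul (c : ℝ) (f : ℝ → ℝ) :
    tsubTerm β (fun y => c * f y) x = fun j => c * tsubTerm β f x j := by
  ext j
  simp only [tsubTerm]
  ring

theorem tsubTerm_const (c : ℝ) :
    tsubTerm β (fun _ => c) x =
      fun j : {j : ℤ // j ≠ 0} => β * c * (1 / (x + 2 * ((j : ℤ) : ℝ)) ^ 2) := by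
  ext j
  simp only [tsubTerm]
  ring

theorem Tsub_const_mul (c : ℝ) (f : ℝ → ℝ) : Tsub β (fun y => c * f y) x = c * Tsub β f x := by
  simp only [Tsub_eq_tsum, tsubTerm_const_mul, tsum_mul_left]

theorem tsubTerm_nonneg (hβ : 0 < β) (hx : x ∈ Ioo (-1 : ℝ) 1) {f : ℝ → ℝ}
    (hf : ∀ y ∈ Ioo (-β) β, 0 ≤ f y) (j : {j : ℤ // j ≠ 0}) : 0 ≤ tsubTerm β f x j :=
  mul_nonneg (by positivity) (hf _ (neg_div_mem_Ioo hβ hx j.2))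

theorem Tsub_nonneg (hβ : 0 < β) (hx : x ∈ Ioo (-1 : ℝ) 1) {f : ℝ → ℝ}
    (hf : ∀ y ∈ Ioo (-β) β, 0 ≤ f y) : 0 ≤ Tsub β f x :=
  tsum_nonneg (tsubTerm_nonneg hβ hx hf)

theorem Tsub_le_Tsub (hβ : 0 < β) (hx : x ∈ Ioo (-1 : ℝ) 1) {f g : ℝ → ℝ}
    (hf : ∀ y ∈ Ioo (-β) β, 0 ≤ f y) (hfg : ∀ y ∈ Ioo (-β) β, f y ≤ g y)
    (hg : Summable (tsubTerm β g x)) : Tsub β f x ≤ Tsub β g x := by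
  have hle (j : {j : ℤ // j ≠ 0}) : tsubTerm β f x j ≤ tsubTerm β g x j :=
    mul_le_mul_of_nonneg_left (hfg _ (neg_div_mem_Ioo hβ hx j.2)) (by positivity)
  exact (hg.of_nonneg_of_le (tsubTerm_nonneg hβ hx hf) hle).tsum_le_tsum hle hg

theorem hasSum_tsubTerm_kap (hβ : β ≠ 0) (hx : x ∈ Ioo (-1 : ℝ) 1) :
    HasSum (tsubTerm β (kap β) x) (1 / (1 - x ^ 2)) := by
  convert hasSum_inv_sq_sub_one hx using 2 with j
  have hq := one_lt_sq_add_two_mul hx j.2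
  exact mul_kap_neg_div hβ (ne_zero_pow two_ne_zero (by positivity))

theorem iterate_Tsub_kap_one_nonneg_and_le (hβ : 0 < β) (hβ1 : β ≤ 1) (n : ℕ)
    (hx : x ∈ Ioo (-1 : ℝ) 1) :
    0 ≤ (Tsub β)^[n] (kap 1) x ∧ (Tsub β)^[n] (kap 1) x ≤ β ^ n / (1 - x ^ 2) := by
  induction n generalizing x with
  | zero =>
    have : 0 < 1 - x ^ 2 := by nlinarith [hx.1, hx.2]
    simp [kap, this.le]
  | succ n ih =>
    have hsub : Ioo (-β) β ⊆ Ioo (-1) 1 := Ioo_subset_Ioo (neg_le_neg hβ1) hβ1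
    have hle (y : ℝ) (hy : y ∈ Ioo (-β) β) :
        (Tsub β)^[n] (kap 1) y ≤ β ^ (n + 1) * kap β y := calc
      _ ≤ β ^ n * (1 / (1 - y ^ 2)) := by rw [mul_one_div]; exact (ih (hsub hy)).2
      _ ≤ β ^ n * (β * kap β y) := by
        gcongr
        exact one_div_one_sub_sq_le_mul_kap hβ1 hy
      _ = β ^ (n + 1) * kap β y := by ring
    have hsum : Summable (tsubTerm β (fun y => β ^ (n + 1) * kap β y) x) := by
      rw [tsubTerm_const_mul]
      exact (hasSum_tsubTerm_kap hβ.ne' hx).summable.mul_left _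
    rw [Function.iterate_succ_apply']
    refine ⟨Tsub_nonneg hβ hx fun y hy => (ih (hsub hy)).1, ?_⟩
    calc Tsub β _ x ≤ Tsub β (fun y => β ^ (n + 1) * kap β y) x :=
          Tsub_le_Tsub hβ hx (fun y hy => (ih (hsub hy)).1) hle hsum
      _ = β ^ (n + 1) / (1 - x ^ 2) := by
        rw [Tsub_const_mul, Tsub_eq_tsum, (hasSum_tsubTerm_kap hβ.ne' hx).tsum_eq, mul_one_div]

theorem iterate_Tsub_kap_one_le (hβ : 0 < β) (hβ1 : β < 1) {n : ℕ} (hn : 1 ≤ n)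
    (hx : x ∈ Ioo (-1 : ℝ) 1) : (Tsub β)^[n] (kap 1) x ≤ 2 * β ^ n / (1 - β) := by
  obtain ⟨m, rfl⟩ := Nat.exists_eq_add_of_le' hn
  obtain ⟨s, hs2, hs⟩ := exists_hasSum_inv_sq_add_two_mul_le_two hx
  have hsub : Ioo (-β) β ⊆ Ioo (-1) 1 := Ioo_subset_Ioo (neg_le_neg hβ1.le) hβ1.le
  have hbound y (hy : y ∈ Ioo (-β) β) :=
    iterate_Tsub_kap_one_nonneg_and_le hβ hβ1.le m (hsub hy)
  have hβ2 : 0 < 1 - β ^ 2 := by nlinarith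
  have hle (y : ℝ) (hy : y ∈ Ioo (-β) β) : (Tsub β)^[m] (kap 1) y ≤ β ^ m / (1 - β ^ 2) :=
    (hbound y hy).2.trans <|
      div_le_div_of_nonneg_left (by positivity) hβ2 (by nlinarith [sq_lt_sq' hy.1 hy.2])
  have hsum : Summable (tsubTerm β (fun _ => β ^ m / (1 - β ^ 2)) x) := by
    rw [tsubTerm_const]
    exact (hs.mul_left _).summable
  rw [Function.iterate_succ_apply']
  calc Tsub β _ x ≤ Tsub β (fun _ => β ^ m / (1 - β ^ 2)) x :=
        Tsub_le_Tsub hβ hx (fun y hy => (hbound y hy).1) hle hsum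
    _ = β * (β ^ m / (1 - β ^ 2)) * s := by
        rw [Tsub_eq_tsum, tsubTerm_const, (hs.mul_left _).tsum_eq]
    _ ≤ β * (β ^ m / (1 - β ^ 2)) * 2 := by gcongr
    _ = 2 * β ^ (m + 1) / (1 - β ^ 2) := by ring
    _ ≤ 2 * β ^ (m + 1) / (1 - β) := by
        gcongr
        nlinarith

end Subtransfer

/-- Subinvariance of the key functions `κ_β` and `κ₁` under the subtransfer operator:
(a) `T_β κ_β = κ₁` on `(-1,1)`, with absolute convergence of the series;
(b) `0 ≤ T_β^n κ₁ ≤ β^n κ₁` on `(-1,1)`;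
(c) for `β < 1`, `T_β^n κ₁ ≤ 2β^n/(1-β)` on `(-1,1)`. -/
theorem subtransfer_kappa_subinvariance
    (β : ℝ) (hβ0 : 0 < β) (hβ1 : β ≤ 1) :
    (∀ x ∈ Ioo (-1 : ℝ) 1,
      Summable (fun j : {j : ℤ // j ≠ 0} =>
        |(β / (x + 2 * ((j : ℤ) : ℝ)) ^ 2) * kap β (-β / (x + 2 * ((j : ℤ) : ℝ)))|) ∧
      Tsub β (kap β) x = 1 / (1 - x ^ 2)) ∧
    (∀ n : ℕ, 1 ≤ n → ∀ x ∈ Ioo (-1 : ℝ) 1,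
      0 ≤ (Tsub β)^[n] (kap 1) x ∧ (Tsub β)^[n] (kap 1) x ≤ β ^ n / (1 - x ^ 2)) ∧
    (β < 1 → ∀ n : ℕ, 1 ≤ n → ∀ x ∈ Ioo (-1 : ℝ) 1,
      (Tsub β)^[n] (kap 1) x ≤ 2 * β ^ n / (1 - β)) := by
  open Subtransfer in
  exact ⟨fun x hx => ⟨(hasSum_tsubTerm_kap hβ0.ne' hx).summable.abs,
      (hasSum_tsubTerm_kap hβ0.ne' hx).tsum_eq⟩,
    fun n _ x hx => iterate_Tsub_kap_one_nonneg_and_le hβ0 hβ1 n hx,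
    fun hβ n hn x hx => iterate_Tsub_kap_one_le hβ0 hβ hn hx⟩
end

section
/- Fix 0 < β ≤ 1. If f : [−β,β] → ℝ is continuous, then for every x ∈ [−1,1] the series (T_β f)(x) = ∑_{j∈ℤ, j≠0} (β/(x+2j)²)·f(−β/(x+2j)) converges absolutely, and the resulting function T_β f is continuous on the closed interval [−1,1]. If, in addition, f is odd (f(−t) = −f(t) for t ∈ [−β,β]), then (T_β f)(1) = β·f(β). -/
/-!
Since `|x + 2j| ≥ |j|` for `|x| ≤ 1`, the `j`-th term is bounded by `β ‖f‖∞ / j²` uniformly on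
`[-1, 1]`, so the series converges absolutely and uniformly, hence to a continuous function.
At `x = 1` the reflection `j ↦ -1 - j` sends `1 + 2j` to `-(1 + 2j)`, so for odd `f` it changes
the sign of every term of the full series over `ℤ`, which therefore sums to `0`; removing its
`j = 0` term `β f(-β) = -β f(β)` leaves `β f(β)`.
-/

open MeasureTheory Set Filter

/-- `Tsub β f x` is definitionally `∑' j : {j : ℤ // j ≠ 0}, tsubTerm β f x j`; the `j = 0` term
is kept so that the reflection `j ↦ -1 - j` acts on the index set. -/
noncomputable def tsubTerm (β : ℝ) (f : ℝ → ℝ) (x : ℝ) (j : ℤ) : ℝ :=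
  β / (x + 2 * (j : ℝ)) ^ 2 * f (-β / (x + 2 * (j : ℝ)))

lemma abs_intCast_le_abs_add_two_mul {x : ℝ} (hx : |x| ≤ 1) (j : ℤ) :
    |(j : ℝ)| ≤ |x + 2 * j| := by
  rcases eq_or_ne j 0 with rfl | hj
  · simp
  have hj1 : (1 : ℝ) ≤ |(j : ℝ)| := by exact_mod_cast Int.one_le_abs hj
  rw [abs_le] at hx
  cases abs_cases (j : ℝ) <;> cases abs_cases (x + 2 * j) <;> linarith

lemma one_le_abs_add_two_mul {x : ℝ} (hx : |x| ≤ 1) {j : ℤ} (hj : j ≠ 0) :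
    1 ≤ |x + 2 * j| :=
  (by exact_mod_cast Int.one_le_abs hj : (1 : ℝ) ≤ |(j : ℝ)|).trans
    (abs_intCast_le_abs_add_two_mul hx j)

lemma neg_div_mem_Icc {β d : ℝ} (hβ : 0 ≤ β) (hd : 1 ≤ |d|) : -β / d ∈ Icc (-β) β := by
  refine abs_le.1 ?_
  rw [abs_div, abs_neg, abs_of_nonneg hβ]
  exact div_le_self hβ hd

section

variable {β : ℝ} {f : ℝ → ℝ}

lemma continuousOn_tsubTerm (hβ : 0 ≤ β) (hf : ContinuousOn f (Icc (-β) β)) {j : ℤ}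
    (hj : j ≠ 0) : ContinuousOn (fun x => tsubTerm β f x j) (Icc (-1) 1) := by
  have hden : ∀ x ∈ Icc (-1 : ℝ) 1, x + 2 * (j : ℝ) ≠ 0 := fun x hx h => by
    have := one_le_abs_add_two_mul (abs_le.2 hx) hj
    rw [h, abs_zero] at this
    linarith
  have hlin : ContinuousOn (fun x : ℝ => x + 2 * (j : ℝ)) (Icc (-1) 1) := by fun_prop
  have hmaps : MapsTo (fun x : ℝ => -β / (x + 2 * (j : ℝ))) (Icc (-1) 1) (Icc (-β) β) :=
    fun x hx => neg_div_mem_Icc hβ (one_le_abs_add_two_mul (abs_le.2 hx) hj)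
  exact (continuousOn_const.div (hlin.pow 2) fun x hx => pow_ne_zero 2 (hden x hx)).mul
    (hf.comp (continuousOn_const.div hlin hden) hmaps)

lemma abs_tsubTerm_le (hβ : 0 ≤ β) {C : ℝ} (hC : ∀ t ∈ Icc (-β) β, |f t| ≤ C) {x : ℝ}
    (hx : |x| ≤ 1) {j : ℤ} (hj : j ≠ 0) : |tsubTerm β f x j| ≤ β * C / (j : ℝ) ^ 2 := by
  set d := x + 2 * (j : ℝ)
  have hfC : |f (-β / d)| ≤ C := hC _ (neg_div_mem_Icc hβ (one_le_abs_add_two_mul hx hj))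
  have hj2 : 0 < (j : ℝ) ^ 2 := by positivity
  have hjd : (j : ℝ) ^ 2 ≤ d ^ 2 := sq_le_sq.2 (abs_intCast_le_abs_add_two_mul hx j)
  calc |tsubTerm β f x j| = β / d ^ 2 * |f (-β / d)| := by
        rw [tsubTerm, abs_mul, abs_of_nonneg (by positivity)]
    _ ≤ β / (j : ℝ) ^ 2 * C :=
        mul_le_mul (div_le_div_of_nonneg_left hβ hj2 hjd) hfC (abs_nonneg _) (by positivity)
    _ = β * C / (j : ℝ) ^ 2 := by ring

lemma tsubTerm_one_neg_one_sub (hβ : 0 ≤ β) (hodd : ∀ t ∈ Icc (-β) β, f (-t) = -f t)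
    (j : ℤ) : tsubTerm β f 1 (-1 - j) = -tsubTerm β f 1 j := by
  have hodd_int : (1 + 2 * j : ℤ) ≠ 0 := by omega
  have hd : (1 : ℝ) ≤ |1 + 2 * (j : ℝ)| := by exact_mod_cast Int.one_le_abs hodd_int
  have hf := hodd _ (neg_div_mem_Icc hβ hd)
  rw [neg_div, neg_neg] at hf
  simp only [tsubTerm, Int.cast_sub, Int.cast_neg, Int.cast_one,
    show (1 : ℝ) + 2 * (-1 - j) = -(1 + 2 * j) by ring, neg_sq, div_neg, neg_neg, neg_div, hf]
  ring

end

lemma tsum_eq_zero_of_comp_eq_neg {α : Type*} (e : α ≃ α) {g : α → ℝ}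
    (hg : ∀ a, g (e a) = -g a) : ∑' a, g a = 0 := by
  have h := e.tsum_eq g
  simp only [hg, tsum_neg] at h
  exact self_eq_neg.1 h.symm

lemma Tsub_one_eq_of_odd {β : ℝ} {f : ℝ → ℝ} (hβ : 0 ≤ β)
    (hsum : Summable fun j : {j : ℤ // j ≠ 0} => tsubTerm β f 1 j)
    (hodd : ∀ t ∈ Icc (-β) β, f (-t) = -f t) : Tsub β f 1 = β * f β := by
  have hfull : Summable (tsubTerm β f 1) := (Set.finite_singleton 0).summable_compl_iff.1 hsum
  have hzero : ∑' j, tsubTerm β f 1 j = 0 :=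
    tsum_eq_zero_of_comp_eq_neg (Equiv.subLeft (-1)) (tsubTerm_one_neg_one_sub hβ hodd)
  have hsplit := hfull.tsum_subtype_add_tsum_subtype_compl {0}
  rw [tsum_singleton, hzero] at hsplit
  have hf0 : f (-β) = -f β := by simpa using hodd β ⟨by linarith, le_rfl⟩
  change tsubTerm β f 1 0 + Tsub β f 1 = 0 at hsplit
  simp only [tsubTerm, Int.cast_zero, mul_zero, add_zero, one_pow, div_one, hf0] at hsplit
  linarith

theorem subtransfer_continuous_and_endpoint_value_general
    (β : ℝ) (hβ0 : 0 < β) (f : ℝ → ℝ)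
    (hf : ContinuousOn f (Icc (-β) β)) :
    (∀ x ∈ Icc (-1 : ℝ) 1,
      Summable (fun j : {j : ℤ // j ≠ 0} =>
        |(β / (x + 2 * ((j : ℤ) : ℝ)) ^ 2) * f (-β / (x + 2 * ((j : ℤ) : ℝ)))|)) ∧
    ContinuousOn (Tsub β f) (Icc (-1 : ℝ) 1) ∧
    ((∀ t ∈ Icc (-β) β, f (-t) = -f t) → Tsub β f 1 = β * f β) := by
  obtain ⟨C, hC⟩ := isCompact_Icc.exists_bound_of_continuousOn hf
  simp only [Real.norm_eq_abs] at hC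
  have hmajorant : Summable fun j : {j : ℤ // j ≠ 0} => β * C / (j : ℝ) ^ 2 := by
    refine (((Real.summable_one_div_int_pow.2 one_lt_two).subtype _).mul_left (β * C)).congr
      fun j => ?_
    simp only [Function.comp_apply, mul_one_div]
  have hbound : ∀ j : {j : ℤ // j ≠ 0}, ∀ x ∈ Icc (-1 : ℝ) 1,
      |tsubTerm β f x j| ≤ β * C / (j : ℝ) ^ 2 :=
    fun j x hx => abs_tsubTerm_le hβ0.le hC (abs_le.2 hx) j.2
  have habs (x) (hx : x ∈ Icc (-1 : ℝ) 1) :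
      Summable fun j : {j : ℤ // j ≠ 0} => |tsubTerm β f x j| :=
    hmajorant.of_nonneg_of_le (fun _ => abs_nonneg _) (hbound · x hx)
  refine ⟨habs, continuousOn_tsum (fun j => continuousOn_tsubTerm hβ0.le hf j.2) hmajorant
    hbound, Tsub_one_eq_of_odd hβ0.le (habs 1 ⟨by norm_num, le_rfl⟩).of_abs⟩

/-- If `f` is continuous on `[-β,β]` then the series defining `T_β f` converges absolutely
at every point of `[-1,1]`, `T_β f` is continuous on `[-1,1]`, and if moreover `f` is odd
then `T_β f(1) = β f(β)`. -/
theorem subtransfer_continuous_and_endpoint_value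
    (β : ℝ) (hβ0 : 0 < β) (hβ1 : β ≤ 1) (f : ℝ → ℝ)
    (hf : ContinuousOn f (Icc (-β) β)) :
    (∀ x ∈ Icc (-1 : ℝ) 1,
      Summable (fun j : {j : ℤ // j ≠ 0} =>
        |(β / (x + 2 * ((j : ℤ) : ℝ)) ^ 2) * f (-β / (x + 2 * ((j : ℤ) : ℝ)))|)) ∧
    ContinuousOn (Tsub β f) (Icc (-1 : ℝ) 1) ∧
    ((∀ t ∈ Icc (-β) β, f (-t) = -f t) → Tsub β f 1 = β * f β) :=
  subtransfer_continuous_and_endpoint_value_general β hβ0 f hf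
end

section
/- Let γ > 0 and let g_γ(t) := t·√(γ²−t²) for t ∈ [−γ,γ], extended by zero outside [−γ,γ]. Then: (a) for every real x with |x| > γ, (1/π)·∫_{−γ}^{γ} g_γ(t)/(x−t) dt = x² − γ²/2 − |x|·√(x²−γ²); (b) for every x with |x| < γ, the principal value lim_{ε→0⁺} (1/π)·∫_{[−γ,γ]∖(x−ε,x+ε)} g_γ(t)/(x−t) dt exists and equals x² − γ²/2. -/
/-! With `r = √(γ² - t²)` and `A = corePrimitive γ x`, one checks
`t r / (x - t) = A'(t) + x (γ² - x²) / (r (x - t))` and `A(γ) - A(-γ) = π (x² - γ²/2)`.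
The remaining term is `x (γ² - x²)` times the Hilbert kernel of `1 / r`, which has an elementary
primitive. For `|x| > γ` it is `|x| √(x² - γ²) arcsin ((γ² - x t) / (γ (x - t)))`, running from
`arcsin 1` to `arcsin (-1)`. For `|x| < γ` it is
`x √(γ² - x²) log ((γ² - x t + √(γ² - x²) r) / |x - t|)`: the singular parts `log |x - t|` at
`x ± ε` cancel in the principal value, and the logarithm takes the same value `log γ` at `t = ±γ`,
so only `A` contributes. -/

open MeasureTheory Set Filter

/-- `g_γ(t) = t √(γ² - t²)` on `[-γ,γ]`, extended by zero. -/
noncomputable def gfun (γ t : ℝ) : ℝ :=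
  if t ∈ Icc (-γ) γ then t * Real.sqrt (γ ^ 2 - t ^ 2) else 0

open Topology Real

theorem setIntegral_Icc_eq_sub_of_hasDerivAt {f F : ℝ → ℝ} {a b : ℝ} (hab : a ≤ b)
    (hF : ContinuousOn F (Icc a b)) (hderiv : ∀ t ∈ Ioo a b, HasDerivAt F (f t) t)
    (hf : ContinuousOn f (Icc a b)) :
    ∫ t in Icc a b, f t = F b - F a := by
  rw [integral_Icc_eq_integral_Ioc, ← intervalIntegral.integral_of_le hab]
  exact intervalIntegral.integral_eq_sub_of_hasDerivAt_of_le hab hF hderiv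
    ((hf.mono (uIcc_of_le hab).subset).intervalIntegrable)

lemma Icc_diff_Ioo_eq_union {a b x ε : ℝ} (hε : 0 ≤ ε) (ha : a ≤ x - ε) (hb : x + ε ≤ b) :
    Icc a b \ Ioo (x - ε) (x + ε) = Icc a (x - ε) ∪ Icc (x + ε) b := by
  ext t
  simp only [Set.mem_sdiff, mem_Icc, mem_Ioo, mem_union, not_and_or, not_lt]
  constructor
  · rintro ⟨⟨hat, htb⟩, hle | hle⟩
    · exact Or.inl ⟨hat, hle⟩
    · exact Or.inr ⟨hle, htb⟩
  · rintro (⟨hat, hle⟩ | ⟨hle, htb⟩)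
    · exact ⟨⟨hat, by linarith⟩, Or.inl hle⟩
    · exact ⟨⟨by linarith, htb⟩, Or.inr hle⟩

lemma setIntegral_Icc_diff_Ioo_eq {f Φ : ℝ → ℝ} {a b x c ε : ℝ}
    (hf : ContinuousOn f (Icc a b \ {x})) (hΦ : ContinuousOn Φ (Icc a b))
    (hderiv : ∀ t ∈ Ioo a b, t ≠ x → HasDerivAt (fun u => Φ u - c * log |x - u|) (f t) t)
    (hε : 0 < ε) (hεa : ε < x - a) (hεb : ε < b - x) :
    ∫ t in Icc a b \ Ioo (x - ε) (x + ε), f t =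
      ((Φ b - c * log |x - b|) - (Φ a - c * log |x - a|)) - (Φ (x + ε) - Φ (x - ε)) := by
  set G := fun u => Φ u - c * log |x - u|
  have hG : ContinuousOn G (Icc a b \ {x}) :=
    (hΦ.mono sdiff_subset).sub (continuousOn_const.mul (ContinuousOn.log (by fun_prop)
      fun t ht => abs_ne_zero.mpr (sub_ne_zero.mpr (Ne.symm ht.2))))
  have side : ∀ p q, a ≤ p → q ≤ b → p ≤ q → x ∉ Icc p q →
      IntegrableOn f (Icc p q) ∧ ∫ t in Icc p q, f t = G q - G p := by
    intro p q hap hqb hpq hx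
    have hsub : Icc p q ⊆ Icc a b \ {x} :=
      fun t ht => ⟨Icc_subset_Icc hap hqb ht, fun h => hx (h ▸ ht)⟩
    refine ⟨(hf.mono hsub).integrableOn_compact isCompact_Icc,
      setIntegral_Icc_eq_sub_of_hasDerivAt hpq (hG.mono hsub) (fun t ht => ?_) (hf.mono hsub)⟩
    exact hderiv t ⟨hap.trans_lt ht.1, ht.2.trans_le hqb⟩ fun h => hx (h ▸ Ioo_subset_Icc_self ht)
  obtain ⟨hleft, hleft_eq⟩ := side a (x - ε) le_rfl (by linarith) (by linarith)
    fun h => by linarith [h.2]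
  obtain ⟨hright, hright_eq⟩ := side (x + ε) b (by linarith) le_rfl (by linarith)
    fun h => by linarith [h.1]
  have hdisj : Disjoint (Icc a (x - ε)) (Icc (x + ε) b) :=
    disjoint_left.mpr fun t h1 h2 => by linarith [h1.2, h2.1]
  rw [Icc_diff_Ioo_eq_union hε.le (by linarith) (by linarith),
    setIntegral_union hdisj measurableSet_Icc hleft hright, hleft_eq, hright_eq]
  simp only [G, sub_add_cancel_left, sub_sub_cancel, abs_neg, abs_of_pos hε]
  ring

theorem tendsto_setIntegral_Icc_diff_Ioo {f Φ : ℝ → ℝ} {a b x c : ℝ} (hax : a < x) (hxb : x < b)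
    (hf : ContinuousOn f (Icc a b \ {x})) (hΦ : ContinuousOn Φ (Icc a b))
    (hderiv : ∀ t ∈ Ioo a b, t ≠ x → HasDerivAt (fun u => Φ u - c * log |x - u|) (f t) t) :
    Tendsto (fun ε => ∫ t in Icc a b \ Ioo (x - ε) (x + ε), f t) (𝓝[>] 0)
      (𝓝 ((Φ b - c * log |x - b|) - (Φ a - c * log |x - a|))) := by
  have hshift : ∀ s : ℝ, Tendsto (fun ε => Φ (x + s * ε)) (𝓝[>] 0) (𝓝 (Φ x)) := fun s =>
    (hΦ.continuousAt (Icc_mem_nhds hax hxb)).tendsto.comp (tendsto_nhdsWithin_of_tendsto_nhds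
      ((by fun_prop : Continuous fun ε : ℝ => x + s * ε).tendsto' 0 x (by simp)))
  have hlim := (tendsto_const_nhds (x := (Φ b - c * log |x - b|) - (Φ a - c * log |x - a|))).sub
    ((hshift 1).sub (hshift (-1)))
  simp only [one_mul, neg_one_mul, ← sub_eq_add_neg, sub_self, sub_zero] at hlim
  refine hlim.congr' ?_
  filter_upwards [Ioo_mem_nhdsGT (lt_min (sub_pos.mpr hax) (sub_pos.mpr hxb))] with ε hε
  exact (setIntegral_Icc_diff_Ioo_eq hf hΦ hderiv hε.1 (hε.2.trans_le (min_le_left _ _))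
    (hε.2.trans_le (min_le_right _ _))).symm

lemma sq_sub_sq_pos_of_mem_Ioo {γ t : ℝ} (ht : t ∈ Ioo (-γ) γ) : 0 < γ ^ 2 - t ^ 2 := by
  nlinarith [ht.1, ht.2]

lemma hasDerivAt_sqrt_sq_sub_sq {γ t : ℝ} (ht : t ∈ Ioo (-γ) γ) :
    HasDerivAt (fun u => √(γ ^ 2 - u ^ 2)) (-t / √(γ ^ 2 - t ^ 2)) t := by
  convert ((hasDerivAt_pow 2 t).const_sub (γ ^ 2)).sqrt (sq_sub_sq_pos_of_mem_Ioo ht).ne' using 1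
  field_simp
  ring

lemma hasDerivAt_arcsin_div {γ t : ℝ} (hγ : 0 < γ) (ht : t ∈ Ioo (-γ) γ) :
    HasDerivAt (fun u => arcsin (u / γ)) (1 / √(γ ^ 2 - t ^ 2)) t := by
  have hlt : t / γ ∈ Ioo (-1) 1 := by
    constructor
    · rw [lt_div_iff₀ hγ]; linarith [ht.1]
    · rw [div_lt_one hγ]; exact ht.2
  refine ((Real.hasDerivAt_arcsin hlt.1.ne' hlt.2.ne).comp t
    ((hasDerivAt_id t).div_const γ)).congr_deriv ?_
  have h : 1 - (t / γ) ^ 2 = (γ ^ 2 - t ^ 2) / γ ^ 2 := by field_simp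
  rw [h, sqrt_div (sq_sub_sq_pos_of_mem_Ioo ht).le, sqrt_sq hγ.le]
  field_simp

noncomputable def corePrimitive (γ x t : ℝ) : ℝ :=
  (x ^ 2 - γ ^ 2 / 2) * arcsin (t / γ) - (t / 2 + x) * √(γ ^ 2 - t ^ 2)

lemma hasDerivAt_corePrimitive {γ x t : ℝ} (hγ : 0 < γ) (ht : t ∈ Ioo (-γ) γ) (hxt : t ≠ x) :
    HasDerivAt (corePrimitive γ x)
      (t * √(γ ^ 2 - t ^ 2) / (x - t) + x * (x ^ 2 - γ ^ 2) / (√(γ ^ 2 - t ^ 2) * (x - t))) t := by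
  have hr2 : √(γ ^ 2 - t ^ 2) ^ 2 = γ ^ 2 - t ^ 2 := sq_sqrt (sq_sub_sq_pos_of_mem_Ioo ht).le
  have hr := (sqrt_pos.mpr (sq_sub_sq_pos_of_mem_Ioo ht)).ne'
  have hlin : HasDerivAt (fun u : ℝ => u / 2 + x) (1 / 2) t :=
    ((hasDerivAt_id t).div_const 2).add_const x
  refine (((hasDerivAt_arcsin_div hγ ht).const_mul (x ^ 2 - γ ^ 2 / 2)).sub
    (hlin.mul (hasDerivAt_sqrt_sq_sub_sq ht))).congr_deriv ?_
  field_simp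
  linear_combination (-x - t) * hr2

lemma corePrimitive_sub {γ : ℝ} (hγ : 0 < γ) (x : ℝ) :
    corePrimitive γ x γ - corePrimitive γ x (-γ) = π * (x ^ 2 - γ ^ 2 / 2) := by
  simp only [corePrimitive, div_self hγ.ne', neg_div, arcsin_neg, arcsin_one, neg_sq, sub_self,
    sqrt_zero]
  ring

lemma sq_sub_mul_add_sqrt_mul_sqrt_pos {γ x t : ℝ} (hx : |x| < γ) (ht : t ∈ Icc (-γ) γ) :
    0 < γ ^ 2 - x * t + √(γ ^ 2 - x ^ 2) * √(γ ^ 2 - t ^ 2) := by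
  have hxt : x * t ≤ |x| * γ := by
    calc x * t ≤ |x * t| := le_abs_self _
      _ = |x| * |t| := abs_mul x t
      _ ≤ |x| * γ := mul_le_mul_of_nonneg_left (abs_le.mpr ht) (abs_nonneg x)
  have hγ : |x| * γ < γ ^ 2 := by nlinarith [abs_nonneg x]
  nlinarith [mul_nonneg (sqrt_nonneg (γ ^ 2 - x ^ 2)) (sqrt_nonneg (γ ^ 2 - t ^ 2))]

lemma hasDerivAt_log_sub_log_abs_sub {γ x t : ℝ} (hx : |x| < γ) (ht : t ∈ Ioo (-γ) γ)
    (hxt : t ≠ x) :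
    HasDerivAt
      (fun u => log (γ ^ 2 - x * u + √(γ ^ 2 - x ^ 2) * √(γ ^ 2 - u ^ 2)) - log |x - u|)
      (√(γ ^ 2 - x ^ 2) / (√(γ ^ 2 - t ^ 2) * (x - t))) t := by
  set s := √(γ ^ 2 - x ^ 2)
  have hr2 : √(γ ^ 2 - t ^ 2) ^ 2 = γ ^ 2 - t ^ 2 := sq_sqrt (sq_sub_sq_pos_of_mem_Ioo ht).le
  have hs2 : s ^ 2 = γ ^ 2 - x ^ 2 := sq_sqrt (by nlinarith [sq_abs x, abs_nonneg x])
  have hr := (sqrt_pos.mpr (sq_sub_sq_pos_of_mem_Ioo ht)).ne'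
  have hN : γ ^ 2 - x * t + s * √(γ ^ 2 - t ^ 2) ≠ 0 :=
    (sq_sub_mul_add_sqrt_mul_sqrt_pos hx (Ioo_subset_Icc_self ht)).ne'
  have hxt' := sub_ne_zero.mpr hxt.symm
  have harg : HasDerivAt (fun u => γ ^ 2 - x * u + s * √(γ ^ 2 - u ^ 2))
      (-x + s * (-t / √(γ ^ 2 - t ^ 2))) t :=
    ((((hasDerivAt_id' t).const_mul x).const_sub (γ ^ 2)).add
      ((hasDerivAt_sqrt_sq_sub_sq ht).const_mul s)).congr_deriv (by ring)
  have hlog : HasDerivAt (fun u => log |x - u|) (-1 / (x - t)) t := by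
    simp only [log_abs]
    simpa using ((hasDerivAt_id t).const_sub x).log hxt'
  refine ((harg.log hN).sub hlog).congr_deriv ?_
  field_simp
  linear_combination s * hr2 - √(γ ^ 2 - t ^ 2) * hs2

noncomputable def innerPrimitive (γ x t : ℝ) : ℝ :=
  corePrimitive γ x t +
    x * √(γ ^ 2 - x ^ 2) * log (γ ^ 2 - x * t + √(γ ^ 2 - x ^ 2) * √(γ ^ 2 - t ^ 2))

lemma hasDerivAt_innerPrimitive_sub_log {γ x t : ℝ} (hγ : 0 < γ) (hx : |x| < γ)
    (ht : t ∈ Ioo (-γ) γ) (hxt : t ≠ x) :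
    HasDerivAt (fun u => innerPrimitive γ x u - x * √(γ ^ 2 - x ^ 2) * log |x - u|)
      (t * √(γ ^ 2 - t ^ 2) / (x - t)) t := by
  have hs2 : √(γ ^ 2 - x ^ 2) ^ 2 = γ ^ 2 - x ^ 2 := sq_sqrt (by nlinarith [sq_abs x, abs_nonneg x])
  have hr := (sqrt_pos.mpr (sq_sub_sq_pos_of_mem_Ioo ht)).ne'
  have hsplit : (fun u => innerPrimitive γ x u - x * √(γ ^ 2 - x ^ 2) * log |x - u|) =
      fun u => corePrimitive γ x u + x * √(γ ^ 2 - x ^ 2) *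
        (log (γ ^ 2 - x * u + √(γ ^ 2 - x ^ 2) * √(γ ^ 2 - u ^ 2)) - log |x - u|) := by
    funext u
    rw [innerPrimitive]
    ring
  rw [hsplit]
  refine ((hasDerivAt_corePrimitive hγ ht hxt).add
    ((hasDerivAt_log_sub_log_abs_sub hx ht hxt).const_mul _)).congr_deriv ?_
  field_simp
  linear_combination x * hs2

lemma continuousOn_innerPrimitive {γ x : ℝ} (hx : |x| < γ) :
    ContinuousOn (innerPrimitive γ x) (Icc (-γ) γ) := by
  unfold innerPrimitive corePrimitive
  exact ContinuousOn.add (by fun_prop)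
    (continuousOn_const.mul (ContinuousOn.log (by fun_prop)
      fun t ht => (sq_sub_mul_add_sqrt_mul_sqrt_pos hx ht).ne'))

lemma innerPrimitive_sub {γ x : ℝ} (hγ : 0 < γ) (hx : |x| < γ) :
    (innerPrimitive γ x γ - x * √(γ ^ 2 - x ^ 2) * log |x - γ|) -
      (innerPrimitive γ x (-γ) - x * √(γ ^ 2 - x ^ 2) * log |x - -γ|) =
      π * (x ^ 2 - γ ^ 2 / 2) := by
  obtain ⟨hxγ, hxγ'⟩ := abs_lt.mp hx
  have hright : γ ^ 2 - x * γ = γ * |x - γ| := by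
    rw [abs_of_neg (by linarith)]; ring
  have hleft : γ ^ 2 - x * -γ = γ * |x - -γ| := by
    rw [abs_of_pos (by linarith)]; ring
  rw [← corePrimitive_sub hγ x]
  simp only [innerPrimitive, neg_sq, sub_self, sqrt_zero, mul_zero, add_zero, hright, hleft,
    log_mul hγ.ne' (abs_ne_zero.mpr (sub_ne_zero.mpr hxγ'.ne)),
    log_mul hγ.ne' (abs_ne_zero.mpr (sub_ne_zero.mpr hxγ.ne'))]
  ring

lemma ne_of_mem_Icc_of_lt_abs {γ x t : ℝ} (hx : γ < |x|) (ht : t ∈ Icc (-γ) γ) : t ≠ x :=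
  fun h => by linarith [abs_le.mpr ht, h ▸ hx]

lemma hasDerivAt_arcsin_sq_sub_mul_div {γ x t : ℝ} (hγ : 0 < γ) (hx : γ < |x|)
    (ht : t ∈ Ioo (-γ) γ) :
    HasDerivAt (fun u => arcsin ((γ ^ 2 - x * u) / (γ * (x - u))))
      (-√(x ^ 2 - γ ^ 2) / (√(γ ^ 2 - t ^ 2) * |x - t|)) t := by
  set s := √(x ^ 2 - γ ^ 2)
  set r := √(γ ^ 2 - t ^ 2)
  have hr2 : r ^ 2 = γ ^ 2 - t ^ 2 := sq_sqrt (sq_sub_sq_pos_of_mem_Ioo ht).le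
  have hr : 0 < r := sqrt_pos.mpr (sq_sub_sq_pos_of_mem_Ioo ht)
  have hxγ : 0 < x ^ 2 - γ ^ 2 := by nlinarith [sq_abs x]
  have hs2 : s ^ 2 = x ^ 2 - γ ^ 2 := sq_sqrt hxγ.le
  have hs : 0 < s := sqrt_pos.mpr hxγ
  have hxt : x - t ≠ 0 := sub_ne_zero.mpr (ne_of_mem_Icc_of_lt_abs hx (Ioo_subset_Icc_self ht)).symm
  have hxt2 : |x - t| ^ 2 = (x - t) ^ 2 := sq_abs _
  have hγxt : γ * (x - t) ≠ 0 := mul_ne_zero hγ.ne' hxt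
  have hone_sub : 1 - ((γ ^ 2 - x * t) / (γ * (x - t))) ^ 2 = (s * r / (γ * (x - t))) ^ 2 := by
    field_simp
    linear_combination (γ ^ 2 - x ^ 2) * hr2 - r ^ 2 * hs2
  have hsqrt : √(1 - ((γ ^ 2 - x * t) / (γ * (x - t))) ^ 2) = s * r / (γ * |x - t|) := by
    rw [hone_sub, sqrt_sq_eq_abs, abs_div, abs_mul, abs_mul, abs_of_pos hs, abs_of_pos hr,
      abs_of_pos hγ]
  have hq : ((γ ^ 2 - x * t) / (γ * (x - t))) ^ 2 < 1 := by
    have : 0 < (s * r / (γ * (x - t))) ^ 2 := by positivity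
    linarith
  have hq1 : (γ ^ 2 - x * t) / (γ * (x - t)) ≠ -1 := fun h => by rw [h] at hq; norm_num at hq
  have hq2 : (γ ^ 2 - x * t) / (γ * (x - t)) ≠ 1 := fun h => by rw [h] at hq; norm_num at hq
  have harg : HasDerivAt (fun u => (γ ^ 2 - x * u) / (γ * (x - u)))
      ((-x * (γ * (x - t)) - (γ ^ 2 - x * t) * -γ) / (γ * (x - t)) ^ 2) t :=
    ((((hasDerivAt_id' t).const_mul x).const_sub (γ ^ 2)).congr_deriv (by ring)).div
      ((((hasDerivAt_id' t).const_sub x).const_mul γ).congr_deriv (by ring)) hγxt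
  refine ((Real.hasDerivAt_arcsin hq1 hq2).comp t harg).congr_deriv ?_
  rw [hsqrt]
  field_simp
  linear_combination (x - t) ^ 2 * hs2 - (x ^ 2 - γ ^ 2) * hxt2

noncomputable def outerPrimitive (γ x t : ℝ) : ℝ :=
  corePrimitive γ x t + |x| * √(x ^ 2 - γ ^ 2) * arcsin ((γ ^ 2 - x * t) / (γ * (x - t)))

lemma abs_mul_sub_eq_mul_abs_sub {γ x t : ℝ} (hx : γ < |x|) (ht : t ∈ Ioo (-γ) γ) :
    |x| * (x - t) = x * |x - t| := by
  rcases le_or_gt 0 x with h | h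
  · rw [abs_of_nonneg h] at hx ⊢
    rw [abs_of_pos (by linarith [ht.2])]
  · rw [abs_of_neg h] at hx ⊢
    rw [abs_of_neg (by linarith [ht.1])]
    ring

lemma hasDerivAt_outerPrimitive {γ x t : ℝ} (hγ : 0 < γ) (hx : γ < |x|) (ht : t ∈ Ioo (-γ) γ) :
    HasDerivAt (outerPrimitive γ x) (t * √(γ ^ 2 - t ^ 2) / (x - t)) t := by
  have hs2 : √(x ^ 2 - γ ^ 2) ^ 2 = x ^ 2 - γ ^ 2 := sq_sqrt (by nlinarith [sq_abs x])
  have hr := (sqrt_pos.mpr (sq_sub_sq_pos_of_mem_Ioo ht)).ne'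
  have hxt := ne_of_mem_Icc_of_lt_abs hx (Ioo_subset_Icc_self ht)
  have hxt' := sub_ne_zero.mpr hxt.symm
  refine ((hasDerivAt_corePrimitive hγ ht hxt).add
    ((hasDerivAt_arcsin_sq_sub_mul_div hγ hx ht).const_mul _)).congr_deriv ?_
  field_simp
  linear_combination (γ ^ 2 - x ^ 2) * abs_mul_sub_eq_mul_abs_sub hx ht + (t - x) * |x| * hs2

lemma continuousOn_outerPrimitive {γ x : ℝ} (hγ : 0 < γ) (hx : γ < |x|) :
    ContinuousOn (outerPrimitive γ x) (Icc (-γ) γ) := by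
  unfold outerPrimitive corePrimitive
  exact ContinuousOn.add (by fun_prop) (continuousOn_const.mul (continuous_arcsin.comp_continuousOn
    (ContinuousOn.div (by fun_prop) (by fun_prop)
      fun t ht => mul_ne_zero hγ.ne' (sub_ne_zero.mpr (ne_of_mem_Icc_of_lt_abs hx ht).symm))))

lemma outerPrimitive_sub {γ x : ℝ} (hγ : 0 < γ) (hx : γ < |x|) :
    outerPrimitive γ x γ - outerPrimitive γ x (-γ) =
      π * (x ^ 2 - γ ^ 2 / 2) - π * (|x| * √(x ^ 2 - γ ^ 2)) := by
  have hγx := ne_of_mem_Icc_of_lt_abs hx (right_mem_Icc.mpr (neg_le_self hγ.le))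
  have hγx' := ne_of_mem_Icc_of_lt_abs hx (left_mem_Icc.mpr (neg_le_self hγ.le))
  have hright : (γ ^ 2 - x * γ) / (γ * (x - γ)) = -1 := by
    field_simp
    ring
  have hleft : (γ ^ 2 - x * -γ) / (γ * (x - -γ)) = 1 := by
    field_simp
    ring
  rw [← corePrimitive_sub hγ x]
  simp only [outerPrimitive, hright, hleft, arcsin_neg_one, arcsin_one]
  ring

lemma gfun_eq_mul_sqrt {γ : ℝ} (hγ : 0 ≤ γ) (t : ℝ) : gfun γ t = t * √(γ ^ 2 - t ^ 2) := by
  unfold gfun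
  split_ifs with ht
  · rfl
  · have : γ < |t| := lt_of_not_ge fun h => ht (abs_le.mp h)
    rw [sqrt_eq_zero'.mpr (by nlinarith [sq_abs t]), mul_zero]

lemma continuousOn_mul_sqrt_div_sub (γ x : ℝ) :
    ContinuousOn (fun t => t * √(γ ^ 2 - t ^ 2) / (x - t)) {x}ᶜ :=
  ContinuousOn.div (by fun_prop) (by fun_prop) fun t ht => sub_ne_zero.mpr (Ne.symm ht)

/-- Explicit computation of the Hilbert transform of `g_γ(t) = t√(γ²-t²) 1_{[-γ,γ]}(t)`:
(a) off the support, `(1/π)∫ g_γ(t)/(x-t) dt = x² - γ²/2 - |x|√(x²-γ²)`;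
(b) inside `(-γ,γ)` the principal value exists and equals `x² - γ²/2`. -/
theorem hilbert_transform_of_gfun (γ : ℝ) (hγ : 0 < γ) :
    (∀ x : ℝ, γ < |x| →
      (1 / Real.pi) * (∫ t in Icc (-γ) γ, gfun γ t / (x - t)) =
        x ^ 2 - γ ^ 2 / 2 - |x| * Real.sqrt (x ^ 2 - γ ^ 2)) ∧
    (∀ x : ℝ, |x| < γ →
      Tendsto (fun ε : ℝ =>
          (1 / Real.pi) * ∫ t in (Icc (-γ) γ \ Ioo (x - ε) (x + ε)), gfun γ t / (x - t))
        (nhdsWithin 0 (Ioi 0)) (nhds (x ^ 2 - γ ^ 2 / 2))) := by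
  simp only [gfun_eq_mul_sqrt hγ.le]
  refine ⟨fun x hx => ?_, fun x hx => ?_⟩
  · rw [setIntegral_Icc_eq_sub_of_hasDerivAt (by linarith) (continuousOn_outerPrimitive hγ hx)
      (fun t ht => hasDerivAt_outerPrimitive hγ hx ht) ((continuousOn_mul_sqrt_div_sub γ x).mono
        fun t ht => ne_of_mem_Icc_of_lt_abs hx ht),
      outerPrimitive_sub hγ hx]
    field_simp
  · have hpv := (tendsto_setIntegral_Icc_diff_Ioo (abs_lt.mp hx).1 (abs_lt.mp hx).2
      ((continuousOn_mul_sqrt_div_sub γ x).mono fun t ht => ht.2) (continuousOn_innerPrimitive hx)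
      fun t ht hxt => hasDerivAt_innerPrimitive_sub_log hγ hx ht hxt).const_mul (1 / π)
    rw [innerPrimitive_sub hγ hx, ← mul_assoc, one_div_mul_cancel pi_ne_zero, one_mul] at hpv
    exact hpv
end

section
/- Fix 0 < β < 1 and set x₁ := 1 + √(1−β), x₂ := −1 + √(1−β), and f(x) := 1/(x−x₁) − 1/(x−x₂). Then for every x ∈ (−1,1) with x ≠ x₂, the series ∑_{j∈ℤ, j≠0} (β/(x+2j)²)·f(−β/(x+2j)) converges absolutely and equals f(x); that is, T_β f = f on (−1,1)∖{x₂}, and f restricted to (−1,1) is a nonzero function belonging to weak-L¹ of (−1,1) (but not to L¹ of (−1,1)). -/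
open MeasureTheory Set Filter Topology

/-!
Since `x₁ x₂ = -β`, the substitution `y ↦ -β/y` swaps the poles `x₁, x₂` of `f`, and with the
weight `β/y²` it turns `f y` into `-f y`. For `y = x + 2j` and `x₁ = x₂ + 2` the `j`-th term is
therefore `g j - g (j - 1)` with `g j = 1/(x - x₂ + 2j)`: the series over all of `ℤ` telescopes
to `0`, and the omitted `j = 0` term is `-f x`. On `(-1, 1)` the summand `1/(t - x₁)` is bounded,
while `1/(t - x₂)` has its pole inside, so it lies in weak-`L¹` but not in `L¹`.
-/

section Telescoping

variable {G : Type*} [AddCommGroup G]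

theorem HasSum.subtype_ne {ι : Type*} [TopologicalSpace G] [IsTopologicalAddGroup G]
    {f : ι → G} {a : G} (h : HasSum f a) (i : ι) :
    HasSum (fun j : {j // j ≠ i} ↦ f j) (a - f i) :=
  (hasSum_singleton i f).hasSum_compl_iff.mpr (by rwa [add_sub_cancel])

theorem hasSum_sub_of_tendsto [TopologicalSpace G] [IsTopologicalAddGroup G] [T2Space G]
    {f : ℕ → G} {l : G} (hs : Summable fun n ↦ f (n + 1) - f n)
    (hf : Tendsto f atTop (𝓝 l)) : HasSum (fun n ↦ f (n + 1) - f n) (l - f 0) := by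
  rw [hs.hasSum_iff_tendsto_nat]
  simpa only [Finset.sum_range_sub] using hf.sub_const (f 0)

theorem hasSum_int_sub_of_tendsto [UniformSpace G] [IsUniformAddGroup G] [CompleteSpace G]
    [T2Space G] {g : ℤ → G} (hs : Summable fun j ↦ g j - g (j - 1))
    (htop : Tendsto g atTop (𝓝 0)) (hbot : Tendsto g atBot (𝓝 0)) :
    HasSum (fun j ↦ g j - g (j - 1)) 0 := by
  have hpos : HasSum (fun n : ℕ ↦ g n - g (n - 1)) (-g (-1)) := by
    have h := hasSum_sub_of_tendsto (f := fun n : ℕ ↦ g (n - 1)) ?_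
      (htop.comp (tendsto_atTop_add_const_right _ (-1) tendsto_natCast_atTop_atTop))
    · simpa only [Nat.cast_add, Nat.cast_one, add_sub_cancel_right, Nat.cast_zero, zero_sub]
        using h
    · simpa only [Nat.cast_add, Nat.cast_one, add_sub_cancel_right, Function.comp_def]
        using hs.comp_injective Nat.cast_injective
  have hneg_eq : (fun n : ℕ ↦ g (-(n + 1)) - g (-(n + 1) - 1))
      = fun n : ℕ ↦ -g (-((n + 1 : ℕ) : ℤ) - 1) - -g (-(n : ℤ) - 1) := by
    funext n
    simp only [Nat.cast_succ, neg_add']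
    abel
  have hneg : HasSum (fun n : ℕ ↦ g (-(n + 1)) - g (-(n + 1) - 1)) (g (-1)) := by
    have h := hasSum_sub_of_tendsto (l := 0) (f := fun n : ℕ ↦ -g (-(n : ℤ) - 1)) ?_ ?_
    · rw [hneg_eq]
      simpa only [Nat.cast_zero, neg_zero, zero_sub, neg_neg] using h
    · rw [← hneg_eq]
      exact hs.comp_injective (i := fun n : ℕ ↦ -((n : ℤ) + 1)) (fun a b h ↦ by simpa using h)
    · have hdown : Tendsto (fun n : ℕ ↦ -(n : ℤ) - 1) atTop atBot :=
        tendsto_atBot_add_const_right _ (-1)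
          (tendsto_neg_atTop_atBot.comp tendsto_natCast_atTop_atTop)
      simpa only [neg_zero, Function.comp_def] using (hbot.comp hdown).neg
  simpa using HasSum.of_nat_of_neg_add_one (f := fun j ↦ g j - g (j - 1)) hpos hneg

end Telescoping

theorem summable_inv_add_two_mul_sq (c : ℝ) : Summable fun j : ℤ ↦ ((c + 2 * j)⁻¹) ^ 2 := by
  refine (((Real.summable_one_div_int_add_rpow (c / 2) 2).mpr one_lt_two).mul_left 4⁻¹).congr
    fun j ↦ ?_
  rw [Real.rpow_two, sq_abs, show c + 2 * (j : ℝ) = 2 * (j + c / 2) by ring, mul_inv, mul_pow,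
    one_div, inv_pow]
  norm_num

theorem abs_inv_sub_inv_le_of_sub_eq_two {u v : ℝ} (hu : u ≠ 0) (hv : v ≠ 0) (h : u - v = 2) :
    |u⁻¹ - v⁻¹| ≤ (u⁻¹) ^ 2 + (v⁻¹) ^ 2 := by
  have : u⁻¹ - v⁻¹ = -(2 * u⁻¹ * v⁻¹) := by
    rw [inv_sub_inv hu hv]; field_simp; linarith
  rw [this, abs_neg, abs_mul, abs_mul, abs_two, ← sq_abs u⁻¹, ← sq_abs v⁻¹]
  exact two_mul_le_add_sq _ _

theorem summable_abs_inv_add_two_mul_sub {c : ℝ} (hc : ∀ j : ℤ, c + 2 * j ≠ 0) :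
    Summable fun j : ℤ ↦ |(c + 2 * (j : ℝ))⁻¹ - (c + 2 * ((j - 1 : ℤ) : ℝ))⁻¹| := by
  have hshift : Summable fun j : ℤ ↦ ((c + 2 * ((j - 1 : ℤ) : ℝ))⁻¹) ^ 2 :=
    (summable_inv_add_two_mul_sq (c - 2)).congr fun j ↦ by push_cast; ring_nf
  refine ((summable_inv_add_two_mul_sq c).add hshift).of_nonneg_of_le (fun _ ↦ abs_nonneg _)
    fun j ↦ abs_inv_sub_inv_le_of_sub_eq_two (hc j) (hc (j - 1)) (by push_cast; ring)

theorem tendsto_inv_add_two_mul_atTop (c : ℝ) :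
    Tendsto (fun j : ℤ ↦ (c + 2 * (j : ℝ))⁻¹) atTop (𝓝 0) :=
  (tendsto_atTop_add_const_left _ c
    (tendsto_intCast_atTop_atTop.const_mul_atTop two_pos)).inv_tendsto_atTop

theorem tendsto_inv_add_two_mul_atBot (c : ℝ) :
    Tendsto (fun j : ℤ ↦ (c + 2 * (j : ℝ))⁻¹) atBot (𝓝 0) :=
  (tendsto_atBot_add_const_left _ c
    ((tendsto_intCast_atBot_iff.mpr tendsto_id).const_mul_atBot two_pos)).inv_tendsto_atBot

theorem hasSum_inv_add_two_mul_sub {c : ℝ} (hc : ∀ j : ℤ, c + 2 * j ≠ 0) :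
    HasSum (fun j : ℤ ↦ (c + 2 * (j : ℝ))⁻¹ - (c + 2 * ((j - 1 : ℤ) : ℝ))⁻¹) 0 :=
  hasSum_int_sub_of_tendsto (summable_abs_inv_add_two_mul_sub hc).of_abs
    (tendsto_inv_add_two_mul_atTop c) (tendsto_inv_add_two_mul_atBot c)

theorem add_two_mul_intCast_ne_zero {t : ℝ} {j : ℤ} (ht : |t| < 2) (h : t ≠ 0 ∨ j ≠ 0) :
    t + 2 * j ≠ 0 := by
  intro h0
  rw [abs_lt] at ht
  have h₁ : (-1 : ℝ) < j := by linarith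
  have h₂ : (j : ℝ) < 1 := by linarith
  have hj : j = 0 := by
    have : -1 < j := by exact_mod_cast h₁
    have : j < 1 := by exact_mod_cast h₂
    omega
  subst hj
  simp only [Int.cast_zero, mul_zero, add_zero] at h0
  simp [h0] at h

section Transfer

variable {β x₁ x₂ x : ℝ} {f : ℝ → ℝ}

theorem div_sq_mul_inv_sub_inv_neg_div {y : ℝ} (hβ : β = -(x₁ * x₂)) (hx₁ : x₁ ≠ 0)
    (hx₂ : x₂ ≠ 0) (hy : y ≠ 0) (hy₁ : y ≠ x₁) (hy₂ : y ≠ x₂) :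
    β / y ^ 2 * ((-β / y - x₁)⁻¹ - (-β / y - x₂)⁻¹) = (y - x₂)⁻¹ - (y - x₁)⁻¹ := by
  have e₁ : -β / y - x₁ = x₁ * (x₂ - y) / y := by rw [hβ]; field_simp
  have e₂ : -β / y - x₂ = x₂ * (x₁ - y) / y := by rw [hβ]; field_simp
  have h₁ : x₂ - y ≠ 0 := sub_ne_zero.mpr hy₂.symm
  have h₂ : x₁ - y ≠ 0 := sub_ne_zero.mpr hy₁.symm
  have h₃ : y - x₁ ≠ 0 := sub_ne_zero.mpr hy₁
  have h₄ : y - x₂ ≠ 0 := sub_ne_zero.mpr hy₂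
  rw [e₁, e₂, hβ]
  field_simp
  ring

theorem transfer_term_eq (hf : ∀ t, f t = (t - x₁)⁻¹ - (t - x₂)⁻¹) (hrel : x₁ = x₂ + 2)
    (hβ : β = -(x₁ * x₂)) (hx₁ : x₁ ≠ 0) (hx₂ : x₂ ≠ 0) (hx : ∀ j : ℤ, x - x₂ + 2 * j ≠ 0)
    {j : ℤ} (hj : x + 2 * j ≠ 0) :
    β / (x + 2 * j) ^ 2 * f (-β / (x + 2 * j))
      = (x - x₂ + 2 * (j : ℝ))⁻¹ - (x - x₂ + 2 * ((j - 1 : ℤ) : ℝ))⁻¹ := by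
  have e₂ : x + 2 * j - x₂ = x - x₂ + 2 * (j : ℝ) := by ring
  have e₁ : x + 2 * j - x₁ = x - x₂ + 2 * ((j - 1 : ℤ) : ℝ) := by rw [hrel]; push_cast; ring
  rw [hf, div_sq_mul_inv_sub_inv_neg_div hβ hx₁ hx₂ hj, e₁, e₂]
  · rw [← sub_ne_zero, e₁]; exact hx (j - 1)
  · rw [← sub_ne_zero, e₂]; exact hx j

theorem transfer_summable_and_hasSum (hf : ∀ t, f t = (t - x₁)⁻¹ - (t - x₂)⁻¹)
    (hrel : x₁ = x₂ + 2) (hβ : β = -(x₁ * x₂)) (hx₁ : x₁ ≠ 0) (hx₂ : x₂ ≠ 0)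
    (hx : ∀ j : ℤ, x - x₂ + 2 * j ≠ 0) (hx₀ : ∀ j : ℤ, j ≠ 0 → x + 2 * j ≠ 0) :
    Summable (fun j : {j : ℤ // j ≠ 0} ↦ |β / (x + 2 * (j : ℝ)) ^ 2 * f (-β / (x + 2 * j))|) ∧
      HasSum (fun j : {j : ℤ // j ≠ 0} ↦ β / (x + 2 * (j : ℝ)) ^ 2 * f (-β / (x + 2 * j)))
        (f x) := by
  have hterm (j : {j : ℤ // j ≠ 0}) := transfer_term_eq hf hrel hβ hx₁ hx₂ hx (hx₀ j j.2)
  simp only [hterm]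
  refine ⟨(summable_abs_inv_add_two_mul_sub hx).subtype _, ?_⟩
  have hfx :
      f x = 0 - ((x - x₂ + 2 * ((0 : ℤ) : ℝ))⁻¹ - (x - x₂ + 2 * ((0 - 1 : ℤ) : ℝ))⁻¹) := by
    rw [hf, hrel]; push_cast; ring_nf
  rw [hfx]
  exact (hasSum_inv_add_two_mul_sub hx).subtype_ne 0

end Transfer

theorem sqrt_one_sub_mem_Ioo {β : ℝ} (hβ0 : 0 < β) (hβ1 : β < 1) : √(1 - β) ∈ Ioo 0 1 :=
  ⟨Real.sqrt_pos.mpr (by linarith), (Real.sqrt_lt' one_pos).mpr (by linarith)⟩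

theorem volume_setOf_lt_abs_inv_sub_le (a : ℝ) {l : ℝ} (hl : 0 < l) :
    volume {t : ℝ | l < |(t - a)⁻¹|} ≤ ENNReal.ofReal (2 / l) := by
  calc volume {t : ℝ | l < |(t - a)⁻¹|} ≤ volume (Metric.ball a l⁻¹) := by
        refine measure_mono fun t (ht : l < |(t - a)⁻¹|) ↦ ?_
        rw [abs_inv] at ht
        have hpos : 0 < |t - a| := by
          by_contra! h
          rw [abs_nonpos_iff.mp h, abs_zero, inv_zero] at ht
          exact ht.not_gt hl
        rw [Metric.mem_ball, Real.dist_eq]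
        exact (lt_inv_comm₀ hl hpos).mp ht
    _ = ENNReal.ofReal (2 / l) := by rw [Real.volume_ball, div_eq_mul_inv]

theorem mul_volume_lt_abs_le_of_abs_add_inv_sub_le {E : Set ℝ} (hE : volume E ≠ ⊤)
    {f : ℝ → ℝ} {a M : ℝ} (hf : ∀ t ∈ E, |f t + (t - a)⁻¹| ≤ M) {l : ℝ} (hl : 0 < l) :
    l * (volume {t | t ∈ E ∧ l < |f t|}).toReal ≤ max (2 * M * (volume E).toReal) 4 := by
  rcases le_or_gt l (2 * M) with hlM | hlM
  · have hsub : (volume {t | t ∈ E ∧ l < |f t|}).toReal ≤ (volume E).toReal :=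
      ENNReal.toReal_mono hE (measure_mono fun t ht ↦ ht.1)
    calc l * (volume {t | t ∈ E ∧ l < |f t|}).toReal ≤ 2 * M * (volume E).toReal :=
          mul_le_mul hlM hsub ENNReal.toReal_nonneg (by linarith)
      _ ≤ _ := le_max_left _ _
  · have hsub : {t | t ∈ E ∧ l < |f t|} ⊆ {t : ℝ | l / 2 < |(t - a)⁻¹|} := by
      rintro t ⟨htE, ht⟩
      have := abs_sub (f t + (t - a)⁻¹) (t - a)⁻¹
      rw [add_sub_cancel_right] at this
      show l / 2 < |(t - a)⁻¹|
      linarith [hf t htE]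
    have hvol : (volume {t | t ∈ E ∧ l < |f t|}).toReal ≤ 4 / l := by
      refine ENNReal.toReal_le_of_le_ofReal (by positivity) ?_
      calc _ ≤ _ := measure_mono hsub
        _ ≤ ENNReal.ofReal (2 / (l / 2)) := volume_setOf_lt_abs_inv_sub_le a (by positivity)
        _ = ENNReal.ofReal (4 / l) := by congr 1; field_simp; norm_num
    calc l * (volume {t | t ∈ E ∧ l < |f t|}).toReal ≤ l * (4 / l) :=
          mul_le_mul_of_nonneg_left hvol hl.le
      _ = 4 := by field_simp
      _ ≤ _ := le_max_right _ _

theorem not_integrableOn_inv_sub_sub_inv_sub {a b c d : ℝ} (hab : a < b) (hc : c ∉ uIcc a b)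
    (hd : d ∈ uIcc a b) : ¬ IntegrableOn (fun t ↦ (t - c)⁻¹ - (t - d)⁻¹) (Ioo a b) := by
  intro h
  have hc' : IntegrableOn (fun t ↦ (t - c)⁻¹) (Ioo a b) :=
    (intervalIntegrable_iff_integrableOn_Ioo_of_le hab.le).mp
      (intervalIntegrable_sub_inv_iff.mpr (Or.inr hc))
  have hd' : IntervalIntegrable (fun t ↦ (t - d)⁻¹) volume a b := by
    rw [intervalIntegrable_iff_integrableOn_Ioo_of_le hab.le]
    exact (hc'.sub h).congr_fun (fun t _ ↦ by simp) measurableSet_Ioo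
  rcases intervalIntegrable_sub_inv_iff.mp hd' with h | h
  · exact hab.ne h
  · exact h hd

/-- A nontrivial `T_β`-invariant function in weak-`L¹` of `(-1,1)`:
with `x₁ = 1 + √(1-β)`, `x₂ = -1 + √(1-β)` and `f(x) = 1/(x-x₁) - 1/(x-x₂)`, the series
defining `T_β f(x)` converges absolutely to `f(x)` for `x ∈ (-1,1) \ {x₂}`; moreover `f`
restricted to `(-1,1)` is nonzero, lies in weak-`L¹(-1,1)`, but not in `L¹(-1,1)`. -/
theorem invariant_weakL1_function_exists
    (β : ℝ) (hβ0 : 0 < β) (hβ1 : β < 1)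
    (x₁ x₂ : ℝ) (hx₁ : x₁ = 1 + Real.sqrt (1 - β)) (hx₂ : x₂ = -1 + Real.sqrt (1 - β))
    (f : ℝ → ℝ) (hf : ∀ x : ℝ, f x = 1 / (x - x₁) - 1 / (x - x₂)) :
    (∀ x ∈ Ioo (-1 : ℝ) 1, x ≠ x₂ →
      Summable (fun j : {j : ℤ // j ≠ 0} =>
        |(β / (x + 2 * ((j : ℤ) : ℝ)) ^ 2) * f (-β / (x + 2 * ((j : ℤ) : ℝ)))|) ∧
      (∑' j : {j : ℤ // j ≠ 0},
        (β / (x + 2 * ((j : ℤ) : ℝ)) ^ 2) * f (-β / (x + 2 * ((j : ℤ) : ℝ)))) = f x) ∧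
    (∃ x ∈ Ioo (-1 : ℝ) 1, f x ≠ 0) ∧
    (∃ C : ℝ, ∀ l : ℝ, 0 < l →
      l * (volume {t : ℝ | t ∈ Ioo (-1 : ℝ) 1 ∧ l < |f t|}).toReal ≤ C) ∧
    ¬ IntegrableOn f (Ioo (-1 : ℝ) 1) := by
  obtain ⟨hs0, hs1⟩ := sqrt_one_sub_mem_Ioo hβ0 hβ1
  have hrel : x₁ = x₂ + 2 := by rw [hx₁, hx₂]; ring
  have hβ : β = -(x₁ * x₂) := by
    rw [hx₁, hx₂]; nlinarith [Real.sq_sqrt (by linarith : 0 ≤ 1 - β)]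
  have hx₂_mem : x₂ ∈ Ioo (-1) 0 := by rw [hx₂]; constructor <;> linarith
  have hx₁_gt : 1 < x₁ := by rw [hx₁]; linarith
  have hf' (t : ℝ) : f t = (t - x₁)⁻¹ - (t - x₂)⁻¹ := by rw [hf, one_div, one_div]
  refine ⟨fun x hx hxx₂ ↦ ?_, ⟨0, by norm_num, ?_⟩,
    ⟨_, fun l hl ↦ mul_volume_lt_abs_le_of_abs_add_inv_sub_le measure_Ioo_lt_top.ne
      (a := x₂) (M := (x₁ - 1)⁻¹) (fun t ht ↦ ?_) hl⟩, ?_⟩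
  · have hx_abs : |x| < 2 := abs_lt.mpr ⟨by linarith [hx.1], by linarith [hx.2]⟩
    have hxx₂_abs : |x - x₂| < 2 :=
      abs_lt.mpr ⟨by linarith [hx.1, hx₂_mem.2], by linarith [hx.2, hx₂_mem.1]⟩
    obtain ⟨hsum, hhas⟩ := transfer_summable_and_hasSum hf' hrel hβ (by linarith) hx₂_mem.2.ne
      (fun j ↦ add_two_mul_intCast_ne_zero hxx₂_abs (.inl (sub_ne_zero.mpr hxx₂)))
      (fun j hj ↦ add_two_mul_intCast_ne_zero hx_abs (.inr hj))
    exact ⟨hsum, hhas.tsum_eq⟩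
  · have h₁ : (0 - x₁)⁻¹ < 0 := inv_lt_zero.mpr (by linarith)
    have h₂ : 0 < (0 - x₂)⁻¹ := inv_pos.mpr (by linarith [hx₂_mem.2])
    rw [hf']
    exact (sub_neg.mpr (h₁.trans h₂)).ne
  · rw [hf', sub_add_cancel, abs_inv, abs_sub_comm, abs_of_pos (by linarith [ht.2])]
    exact inv_anti₀ (by linarith) (by linarith [ht.2])
  · rw [show f = _ from funext hf']
    refine not_integrableOn_inv_sub_sub_inv_sub (by norm_num) ?_ ?_ <;>
      rw [uIcc_of_le (by norm_num)]
    · exact fun h ↦ by linarith [h.2]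
    · exact ⟨hx₂_mem.1.le, by linarith [hx₂_mem.2]⟩
end

section
/- For each fixed t ∈ (−1,1) and each j = 0,1,2,…, the function x ↦ T₁^j[k₁^{II}(1,·) − k₁^{II}(t,·)](x) is well-defined on (−1,1) (all the series occurring in the iterates converge absolutely), is odd, and is strictly increasing on (−1,1). In particular, (T₁^j k₁^{II}(t,·))(x) < (T₁^j k₁^{II}(1,·))(x) for every x ∈ (0,1). -/
open Set

/-- The odd part of the dynamically reduced Hilbert kernel:
`k₁^{II}(t,x) = t²x/(1-t²x²) + ∑_{j≥1} [2x/(4j²-x²) - x/((2j-t)²-x²) - x/((2j+t)²-x²)]`. -/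
noncomputable def kII (t x : ℝ) : ℝ :=
  t ^ 2 * x / (1 - t ^ 2 * x ^ 2) +
    ∑' j : ℕ, (2 * x / (4 * ((j : ℝ) + 1) ^ 2 - x ^ 2)
      - x / ((2 * ((j : ℝ) + 1) - t) ^ 2 - x ^ 2)
      - x / ((2 * ((j : ℝ) + 1) + t) ^ 2 - x ^ 2))

/-!
Every term of the series is a Laplace transform, `x / (a² - x²) = ∫₀^∞ sinh (x u) e^{-a u} du`
for `|x| < a`. Summing the geometric series in `j` gives, for `0 < t < 1` and `0 ≤ x < 1`,
`k(1,x) - k(t,x) = ∫₀^∞ sinh (x u) (A_t(u) - e^{-u/t}) du` with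
`A_t(u) = (e^{-(2-t)u} + e^{-(2+t)u} - 2e^{-3u}) / (1 - e^{-2u})` (for `t = 0` the exponential is
absent). An elementary inequality between exponentials makes the density positive, so the
difference is strictly increasing on `[0,1)`, and on `(-1,1)` because it is odd; negative `t`
reduce to `|t|`.

`T₁` maps bounded odd strictly increasing functions on `(-1,1)` to functions of the same kind:
for `|u| > 1` the point `-1/u` lies in `(-1,1)`, and `u ↦ f(-1/u)/u²` increases on `u > 1` because
there `f(-1/u) < 0` increases while `1/u²` decreases; oddness handles `u < -1`. Since `T₁` is
linear on bounded functions, `T₁ʲ k(1,·) - T₁ʲ k(t,·)` is this odd increasing iterate, which is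
positive on `(0,1)`.
-/

open Real MeasureTheory

lemma StrictMonoOn.neg_of_odd {f : ℝ → ℝ} {s : Set ℝ} (hf : StrictMonoOn f s)
    (hodd : ∀ x ∈ s, f (-x) = -f x) : StrictMonoOn f (-s) := by
  intro a ha b hb hab
  have h := hf hb ha (neg_lt_neg hab)
  rw [← neg_neg a, ← neg_neg b, hodd _ ha, hodd _ hb]
  linarith

lemma StrictMonoOn.Ioo_of_odd {f : ℝ → ℝ} {a : ℝ} (ha : 0 < a) (hf : StrictMonoOn f (Ico 0 a))
    (hodd : ∀ x ∈ Ico 0 a, f (-x) = -f x) : StrictMonoOn f (Ioo (-a) a) := by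
  have hneg : StrictMonoOn f (Ioc (-a) 0) := by simpa using hf.neg_of_odd hodd
  rw [← Ioc_union_Ico_eq_Ioo (neg_lt_zero.2 ha) ha]
  exact hneg.union hf (isGreatest_Ioc (neg_lt_zero.2 ha)) (isLeast_Ico ha)

lemma apply_zero_of_odd {f : ℝ → ℝ} {s : Set ℝ} (hodd : ∀ y ∈ s, f (-y) = -f y)
    (h0 : (0 : ℝ) ∈ s) : f 0 = 0 := by
  have := hodd 0 h0
  rw [neg_zero] at this
  linarith

lemma sinh_mul_mul_exp_neg_mul (x a u : ℝ) :
    sinh (x * u) * exp (-a * u) = (exp (-(a - x) * u) - exp (-(a + x) * u)) / 2 := by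
  rw [sinh_eq, show -(a - x) * u = x * u + -a * u by ring,
    show -(a + x) * u = -(x * u) + -a * u by ring, exp_add, exp_add]
  ring

lemma integral_exp_neg_mul_Ioi {b : ℝ} (hb : 0 < b) : ∫ u in Ioi 0, exp (-b * u) = 1 / b := by
  rw [integral_exp_mul_Ioi (neg_lt_zero.2 hb)]
  simp [neg_div]

lemma integrableOn_sinh_mul_mul_exp_neg_mul {x a : ℝ} (h : |x| < a) :
    IntegrableOn (fun u => sinh (x * u) * exp (-a * u)) (Ioi 0) := by
  obtain ⟨h₁, h₂⟩ := abs_lt.1 h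
  simp_rw [sinh_mul_mul_exp_neg_mul]
  exact ((exp_neg_integrableOn_Ioi 0 (by linarith)).sub
    (exp_neg_integrableOn_Ioi 0 (by linarith))).div_const 2

lemma integral_sinh_mul_mul_exp_neg_mul {x a : ℝ} (h : |x| < a) :
    ∫ u in Ioi 0, sinh (x * u) * exp (-a * u) = x / (a ^ 2 - x ^ 2) := by
  obtain ⟨h₁, h₂⟩ := abs_lt.1 h
  simp_rw [sinh_mul_mul_exp_neg_mul]
  rw [integral_div, integral_sub (exp_neg_integrableOn_Ioi 0 (by linarith))
    (exp_neg_integrableOn_Ioi 0 (by linarith)), integral_exp_neg_mul_Ioi (by linarith),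
    integral_exp_neg_mul_Ioi (by linarith)]
  have : a - x ≠ 0 := by linarith
  have : a + x ≠ 0 := by linarith
  have : a ^ 2 - x ^ 2 ≠ 0 := by nlinarith
  field_simp
  ring

lemma strictMonoOn_integral_sinh_mul {w : ℝ → ℝ} {s : Set ℝ} (hw : ∀ u > 0, 0 < w u)
    (hint : ∀ x ∈ s, IntegrableOn (fun u => sinh (x * u) * w u) (Ioi 0)) :
    StrictMonoOn (fun x => ∫ u in Ioi 0, sinh (x * u) * w u) s := by
  intro x hx y hy hxy
  have hpos : ∀ u ∈ Ioi (0 : ℝ), 0 < sinh (y * u) * w u - sinh (x * u) * w u := fun u hu => by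
    rw [← sub_mul]
    exact mul_pos (sub_pos.2 (sinh_lt_sinh.2 (mul_lt_mul_of_pos_right hxy hu))) (hw u hu)
  rw [← sub_pos, ← integral_sub (hint y hy) (hint x hx), setIntegral_pos_iff_support_of_nonneg_ae
    (ae_restrict_of_forall_mem measurableSet_Ioi fun u hu => (hpos u hu).le)
    ((hint y hy).sub (hint x hx)),
    inter_eq_right.2 fun u hu => Function.mem_support.2 (hpos u hu).ne', volume_Ioi]
  exact ENNReal.zero_lt_top

namespace KII

/-! ### The pole series -/

noncomputable def poleTerm (c x : ℝ) (j : ℕ) : ℝ := x / ((2 * ((j : ℝ) + 1) + c) ^ 2 - x ^ 2)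

noncomputable def poleBound (c : ℝ) (j : ℕ) : ℝ := 1 / ((2 * ((j : ℝ) + 1) + c) ^ 2 - 1)

lemma summable_poleBound {c : ℝ} (hc : -1 ≤ c) : Summable (poleBound c) := by
  refine (summable_nat_add_iff 1).mp <| ((summable_nat_add_iff 1).mpr
    (Real.summable_one_div_nat_pow.mpr one_lt_two)).of_nonneg_of_le (fun n => ?_) (fun n => ?_)
  all_goals
    have hn : (0 : ℝ) ≤ n := n.cast_nonneg
    simp only [poleBound]
    push_cast
  · exact one_div_nonneg.mpr (by nlinarith)
  · exact one_div_le_one_div_of_le (by positivity) (by nlinarith)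

lemma one_lt_pole {c : ℝ} (hc : -1 < c) (j : ℕ) : 1 < 2 * ((j : ℝ) + 1) + c := by
  linarith [j.cast_nonneg (α := ℝ)]

lemma abs_poleTerm_le {c x : ℝ} {j : ℕ} (hpole : 1 < 2 * ((j : ℝ) + 1) + c)
    (hx : x ∈ Ioo (-1 : ℝ) 1) : |poleTerm c x j| ≤ poleBound c j := by
  have hx2 : x ^ 2 < 1 := by nlinarith [hx.1, hx.2]
  have hsq : 1 < (2 * ((j : ℝ) + 1) + c) ^ 2 := by nlinarith
  rw [poleTerm, poleBound, abs_div, abs_of_pos (by linarith : 0 < _ - x ^ 2)]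
  exact div_le_div₀ zero_le_one (abs_le.2 ⟨hx.1.le, hx.2.le⟩) (by linarith) (by linarith)

lemma summable_poleTerm {c x : ℝ} (hc : -1 ≤ c) (hx : x ∈ Ioo (-1 : ℝ) 1) :
    Summable (poleTerm c x) := by
  refine (summable_nat_add_iff 1).mp <|
    ((summable_nat_add_iff 1).mpr (summable_poleBound hc)).of_norm_bounded fun n =>
      abs_poleTerm_le ?_ hx
  push_cast
  linarith [n.cast_nonneg (α := ℝ)]

lemma abs_tsum_poleTerm_le {c x : ℝ} (hc : -1 < c) (hx : x ∈ Ioo (-1 : ℝ) 1) :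
    |∑' j, poleTerm c x j| ≤ ∑' j, poleBound c j :=
  tsum_of_norm_bounded (f := poleTerm c x) (summable_poleBound hc.le).hasSum
    fun j => abs_poleTerm_le (one_lt_pole hc j) hx

lemma tsum_poleTerm_neg_one {x : ℝ} (hx : x ∈ Ioo (-1 : ℝ) 1) :
    ∑' j, poleTerm (-1) x j = x / (1 - x ^ 2) + ∑' j, poleTerm 1 x j := by
  have hshift : ∀ j : ℕ, poleTerm (-1) x (j + 1) = poleTerm 1 x j := fun j => by
    simp only [poleTerm]; push_cast; ring
  have h1 := summable_poleTerm (by norm_num : (-1 : ℝ) ≤ 1) hx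
  rw [((summable_nat_add_iff 1).mp (h1.congr fun j => (hshift j).symm)).tsum_eq_zero_add,
    tsum_congr hshift, poleTerm]
  norm_num

lemma kII_eq_tsum_poleTerm {t x : ℝ} (ht : |t| ≤ 1) (hx : x ∈ Ioo (-1 : ℝ) 1) :
    kII t x = t ^ 2 * x / (1 - t ^ 2 * x ^ 2) +
      (2 * ∑' j, poleTerm 0 x j - ∑' j, poleTerm (-t) x j - ∑' j, poleTerm t x j) := by
  obtain ⟨ht₁, ht₂⟩ := abs_le.1 ht
  have h0 := summable_poleTerm (by norm_num : (-1 : ℝ) ≤ 0) hx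
  have hm := summable_poleTerm (by linarith : -1 ≤ -t) hx
  have hp := summable_poleTerm ht₁ hx
  rw [kII, ← tsum_mul_left, ← (h0.mul_left 2).tsum_sub hm,
    ← ((h0.mul_left 2).sub hm).tsum_sub hp]
  congr 1
  exact tsum_congr fun j => by simp only [poleTerm]; ring

/-- The singular part `x / (1 - x²)` of `kII 1` cancels the first term of `poleTerm (-1)`. -/
lemma kII_one_eq {x : ℝ} (hx : x ∈ Ioo (-1 : ℝ) 1) :
    kII 1 x = 2 * ∑' j, poleTerm 0 x j - 2 * ∑' j, poleTerm 1 x j := by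
  rw [kII_eq_tsum_poleTerm (by norm_num) hx, tsum_poleTerm_neg_one hx]
  ring

lemma kII_neg_left (t x : ℝ) : kII (-t) x = kII t x := by
  unfold kII
  congr 1
  · ring
  · exact tsum_congr fun j => by ring

lemma kII_neg_right (t x : ℝ) : kII t (-x) = -kII t x := by
  unfold kII
  rw [neg_add, ← tsum_neg]
  congr 1
  · ring
  · exact tsum_congr fun j => by ring

lemma abs_sq_mul_div_le {t x : ℝ} (ht : |t| < 1) (hx : x ∈ Ioo (-1 : ℝ) 1) :
    |t ^ 2 * x / (1 - t ^ 2 * x ^ 2)| ≤ 1 / (1 - t ^ 2) := by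
  have ht2 : t ^ 2 < 1 := by nlinarith [sq_abs t, abs_nonneg t]
  have hx2 : x ^ 2 ≤ 1 := by nlinarith [hx.1, hx.2]
  have hden : 1 - t ^ 2 ≤ 1 - t ^ 2 * x ^ 2 := by nlinarith [sq_nonneg t]
  rw [abs_div, abs_of_pos (by linarith : 0 < 1 - t ^ 2 * x ^ 2), abs_mul,
    abs_of_nonneg (sq_nonneg t)]
  exact div_le_div₀ zero_le_one (by nlinarith [abs_le.2 ⟨hx.1.le, hx.2.le⟩, abs_nonneg x])
    (by linarith) hden

lemma exists_abs_kII_le {t : ℝ} (ht : t ∈ Ioc (-1 : ℝ) 1) :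
    ∃ M, ∀ x ∈ Ioo (-1 : ℝ) 1, |kII t x| ≤ M := by
  rcases ht.2.eq_or_lt with rfl | ht₁
  · refine ⟨2 * ∑' j, poleBound 0 j + 2 * ∑' j, poleBound 1 j, fun x hx => ?_⟩
    have h0 := abs_le.1 (abs_tsum_poleTerm_le (by norm_num : (-1 : ℝ) < 0) hx)
    have h1 := abs_le.1 (abs_tsum_poleTerm_le (by norm_num : (-1 : ℝ) < 1) hx)
    rw [kII_one_eq hx, abs_le]
    constructor <;> linarith [h0.1, h0.2, h1.1, h1.2]
  · have habs : |t| < 1 := abs_lt.2 ⟨ht.1, ht₁⟩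
    refine ⟨1 / (1 - t ^ 2) + (2 * ∑' j, poleBound 0 j + ∑' j, poleBound (-t) j +
      ∑' j, poleBound t j), fun x hx => ?_⟩
    have hK := abs_le.1 (abs_sq_mul_div_le habs hx)
    have h0 := abs_le.1 (abs_tsum_poleTerm_le (by norm_num : (-1 : ℝ) < 0) hx)
    have hm := abs_le.1 (abs_tsum_poleTerm_le (by linarith : -1 < -t) hx)
    have hp := abs_le.1 (abs_tsum_poleTerm_le ht.1 hx)
    rw [kII_eq_tsum_poleTerm habs.le hx, abs_le]
    constructor <;> linarith [hK.1, hK.2, h0.1, h0.2, hm.1, hm.2, hp.1, hp.2]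

noncomputable def diffTerm (t x : ℝ) (j : ℕ) : ℝ :=
  poleTerm (-t) x j + poleTerm t x j - 2 * poleTerm 1 x j

lemma summable_diffTerm {t x : ℝ} (ht : |t| ≤ 1) (hx : x ∈ Ioo (-1 : ℝ) 1) :
    Summable (diffTerm t x) := by
  obtain ⟨ht₁, ht₂⟩ := abs_le.1 ht
  exact ((summable_poleTerm (by linarith) hx).add (summable_poleTerm ht₁ hx)).sub
    ((summable_poleTerm (by norm_num) hx).mul_left 2)

lemma kII_one_sub_kII {t x : ℝ} (ht : |t| ≤ 1) (hx : x ∈ Ioo (-1 : ℝ) 1) :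
    kII 1 x - kII t x = ∑' j, diffTerm t x j - t ^ 2 * x / (1 - t ^ 2 * x ^ 2) := by
  obtain ⟨ht₁, ht₂⟩ := abs_le.1 ht
  have hm := summable_poleTerm (by linarith : -1 ≤ -t) hx
  have hp := summable_poleTerm ht₁ hx
  have h1 := summable_poleTerm (by norm_num : (-1 : ℝ) ≤ 1) hx
  have hsum : ∑' j, diffTerm t x j =
      ∑' j, poleTerm (-t) x j + ∑' j, poleTerm t x j - 2 * ∑' j, poleTerm 1 x j := by
    rw [← tsum_mul_left, ← hm.tsum_add hp, ← (hm.add hp).tsum_sub (h1.mul_left 2)]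
    rfl
  rw [kII_one_eq hx, kII_eq_tsum_poleTerm ht hx, hsum]
  ring

/-! ### Laplace representation of `kII 1 - kII t` -/

noncomputable def expTerm (c : ℝ) (j : ℕ) (u : ℝ) : ℝ := exp (-(2 * ((j : ℝ) + 1) + c) * u)

lemma integral_sinh_mul_expTerm {c x : ℝ} (hc : -1 ≤ c) (hx : |x| < 1) (j : ℕ) :
    ∫ u in Ioi 0, sinh (x * u) * expTerm c j u = poleTerm c x j :=
  integral_sinh_mul_mul_exp_neg_mul (by linarith [j.cast_nonneg (α := ℝ)])

lemma integrableOn_sinh_mul_expTerm {c x : ℝ} (hc : -1 ≤ c) (hx : |x| < 1) (j : ℕ) :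
    IntegrableOn (fun u => sinh (x * u) * expTerm c j u) (Ioi 0) :=
  integrableOn_sinh_mul_mul_exp_neg_mul (by linarith [j.cast_nonneg (α := ℝ)])

lemma hasSum_expTerm (c : ℝ) {u : ℝ} (hu : 0 < u) :
    HasSum (fun j => expTerm c j u) (exp (-(2 + c) * u) / (1 - exp (-2 * u))) := by
  have hq : exp (-2 * u) < 1 := exp_lt_one_iff.2 (by linarith)
  have h := (hasSum_geometric_of_lt_one (exp_pos _).le hq).mul_left (exp (-(2 + c) * u))
  rw [← div_eq_mul_inv] at h
  refine (funext fun j => ?_ : (fun j => expTerm c j u) = _) ▸ h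
  rw [expTerm, ← exp_nat_mul, ← exp_add]
  ring_nf

noncomputable def diffWeight (t : ℝ) (j : ℕ) (u : ℝ) : ℝ :=
  expTerm (-t) j u + expTerm t j u - 2 * expTerm 1 j u

lemma expTerm_one_le {c : ℝ} (hc : c ≤ 1) (j : ℕ) {u : ℝ} (hu : 0 ≤ u) :
    expTerm 1 j u ≤ expTerm c j u :=
  exp_le_exp.2 (by nlinarith)

lemma diffWeight_nonneg {t : ℝ} (ht : |t| ≤ 1) (j : ℕ) {u : ℝ} (hu : 0 ≤ u) :
    0 ≤ diffWeight t j u := by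
  obtain ⟨ht₁, ht₂⟩ := abs_le.1 ht
  have := expTerm_one_le (by linarith : -t ≤ 1) j hu
  have := expTerm_one_le ht₂ j hu
  unfold diffWeight
  linarith

lemma sinh_mul_diffWeight (x t : ℝ) (j : ℕ) (u : ℝ) :
    sinh (x * u) * diffWeight t j u = sinh (x * u) * expTerm (-t) j u +
      sinh (x * u) * expTerm t j u - 2 * (sinh (x * u) * expTerm 1 j u) := by
  unfold diffWeight
  ring

lemma integrableOn_sinh_mul_diffWeight {t x : ℝ} (ht : |t| ≤ 1) (hx : |x| < 1) (j : ℕ) :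
    IntegrableOn (fun u => sinh (x * u) * diffWeight t j u) (Ioi 0) := by
  obtain ⟨ht₁, ht₂⟩ := abs_le.1 ht
  simp_rw [sinh_mul_diffWeight]
  exact ((integrableOn_sinh_mul_expTerm (by linarith) hx j).add
    (integrableOn_sinh_mul_expTerm ht₁ hx j)).sub
    ((integrableOn_sinh_mul_expTerm (by norm_num) hx j).const_mul 2)

lemma integral_sinh_mul_diffWeight {t x : ℝ} (ht : |t| ≤ 1) (hx : |x| < 1) (j : ℕ) :
    ∫ u in Ioi 0, sinh (x * u) * diffWeight t j u = diffTerm t x j := by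
  obtain ⟨ht₁, ht₂⟩ := abs_le.1 ht
  have hm := integrableOn_sinh_mul_expTerm (by linarith : -1 ≤ -t) hx j
  have hp := integrableOn_sinh_mul_expTerm ht₁ hx j
  have h1 := integrableOn_sinh_mul_expTerm (by norm_num : (-1 : ℝ) ≤ 1) hx j
  have hmp : IntegrableOn (fun u => sinh (x * u) * expTerm (-t) j u +
      sinh (x * u) * expTerm t j u) (Ioi 0) := hm.add hp
  simp_rw [sinh_mul_diffWeight]
  rw [integral_sub hmp (h1.const_mul 2), integral_add hm hp, integral_const_mul,
    integral_sinh_mul_expTerm (by linarith) hx, integral_sinh_mul_expTerm ht₁ hx,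
    integral_sinh_mul_expTerm (by norm_num) hx]
  rfl

noncomputable def seriesDensity (t u : ℝ) : ℝ :=
  (exp (-(2 - t) * u) + exp (-(2 + t) * u) - 2 * exp (-3 * u)) / (1 - exp (-2 * u))

lemma hasSum_diffWeight (t : ℝ) {u : ℝ} (hu : 0 < u) :
    HasSum (fun j => diffWeight t j u) (seriesDensity t u) := by
  have h := ((hasSum_expTerm (-t) hu).add (hasSum_expTerm t hu)).sub
    ((hasSum_expTerm 1 hu).mul_left 2)
  rw [seriesDensity, show (3 : ℝ) = 2 + 1 by norm_num, sub_eq_add_neg 2 t, sub_div, add_div,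
    mul_div_assoc]
  exact h

lemma tsum_diffTerm_eq_integral {t x : ℝ} (ht : |t| ≤ 1) (hx : x ∈ Ico (0 : ℝ) 1) :
    ∑' j, diffTerm t x j = ∫ u in Ioi 0, sinh (x * u) * seriesDensity t u := by
  have hx' : |x| < 1 := abs_lt.2 ⟨by linarith [hx.1], hx.2⟩
  have hnorm : ∀ j, ∫ u in Ioi 0, ‖sinh (x * u) * diffWeight t j u‖ = diffTerm t x j :=
    fun j => by
      rw [← integral_sinh_mul_diffWeight ht hx' j]
      refine setIntegral_congr_fun measurableSet_Ioi fun u hu => norm_of_nonneg ?_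
      exact mul_nonneg (sinh_nonneg_iff.2 (mul_nonneg hx.1 (le_of_lt hu)))
        (diffWeight_nonneg ht j (le_of_lt hu))
  calc ∑' j, diffTerm t x j = ∑' j, ∫ u in Ioi 0, sinh (x * u) * diffWeight t j u :=
        tsum_congr fun j => (integral_sinh_mul_diffWeight ht hx' j).symm
    _ = ∫ u in Ioi 0, ∑' j, sinh (x * u) * diffWeight t j u :=
        integral_tsum_of_summable_integral_norm (integrableOn_sinh_mul_diffWeight ht hx')
          (by simp_rw [hnorm]; exact summable_diffTerm ht ⟨by linarith [hx.1], hx.2⟩)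
    _ = ∫ u in Ioi 0, sinh (x * u) * seriesDensity t u :=
        setIntegral_congr_fun measurableSet_Ioi fun u hu => by
          rw [tsum_mul_left, (hasSum_diffWeight t hu).tsum_eq]

lemma one_sub_exp_neg_two_mul_pos {u : ℝ} (hu : 0 < u) : 0 < 1 - exp (-2 * u) :=
  sub_pos.2 (exp_lt_one_iff.2 (by linarith))

lemma seriesDensity_pos {t u : ℝ} (ht : |t| < 1) (hu : 0 < u) : 0 < seriesDensity t u := by
  obtain ⟨ht₁, ht₂⟩ := abs_lt.1 ht
  have hm : exp (-3 * u) < exp (-(2 - t) * u) := exp_lt_exp.2 (by nlinarith)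
  have hp : exp (-3 * u) < exp (-(2 + t) * u) := exp_lt_exp.2 (by nlinarith)
  exact div_pos (by linarith) (one_sub_exp_neg_two_mul_pos hu)

lemma seriesDensity_le_exp_neg {t u : ℝ} (ht : |t| ≤ 1) (hu : 0 < u) :
    seriesDensity t u ≤ exp (-u) := by
  obtain ⟨ht₁, ht₂⟩ := abs_le.1 ht
  set a := exp (-(1 - t) * u)
  set b := exp (-(1 + t) * u)
  have ha : a ≤ 1 := exp_le_one_iff.2 (by nlinarith)
  have hb : b ≤ 1 := exp_le_one_iff.2 (by nlinarith)
  have hm : exp (-(2 - t) * u) = exp (-u) * a := by rw [← exp_add]; ring_nf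
  have hp : exp (-(2 + t) * u) = exp (-u) * b := by rw [← exp_add]; ring_nf
  have h3 : exp (-3 * u) = exp (-u) * (a * b) := by rw [← exp_add, ← exp_add]; ring_nf
  have h2 : exp (-2 * u) = a * b := by rw [← exp_add]; ring_nf
  rw [seriesDensity, div_le_iff₀ (one_sub_exp_neg_two_mul_pos hu), hm, hp, h3, h2]
  nlinarith [mul_nonneg (exp_pos (-u)).le (mul_nonneg (sub_nonneg.2 ha) (sub_nonneg.2 hb))]

/-- With `W = e^{-(2-t)u}`, `X = e^{-tu}`, `Y = e^{-u}` and `Z = e^{-(1-t)²u/t}`, clearing the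
denominator `1 - Y²` turns the inequality into `0 < W ((X - Y)² + (1 - Y²)(1 - Z))`. -/
lemma exp_neg_inv_mul_lt_seriesDensity {t u : ℝ} (ht : t ∈ Ioo (0 : ℝ) 1) (hu : 0 < u) :
    exp (-t⁻¹ * u) < seriesDensity t u := by
  obtain ⟨ht₀, ht₁⟩ := ht
  set W := exp (-(2 - t) * u)
  set X := exp (-t * u)
  set Y := exp (-u)
  set Z := exp (-((1 - t) ^ 2 / t) * u)
  have hY : Y < 1 := exp_lt_one_iff.2 (by linarith)
  have hZ : Z < 1 := exp_lt_one_iff.2 (by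
    have : 0 < (1 - t) ^ 2 / t := div_pos (by nlinarith) ht₀
    nlinarith)
  have hp : exp (-(2 + t) * u) = W * X ^ 2 := by rw [sq, ← exp_add, ← exp_add]; ring_nf
  have h3 : exp (-3 * u) = W * X * Y := by rw [← exp_add, ← exp_add]; ring_nf
  have h2 : exp (-2 * u) = Y ^ 2 := by rw [sq, ← exp_add]; ring_nf
  have hinv : exp (-t⁻¹ * u) = W * Z := by
    rw [← exp_add]
    congr 1
    field_simp
    ring
  rw [seriesDensity, lt_div_iff₀ (one_sub_exp_neg_two_mul_pos hu), hp, h3, h2, hinv]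
  have hY2 : 0 < 1 - Y ^ 2 := by nlinarith [exp_pos (-u)]
  nlinarith [mul_pos (exp_pos (-(2 - t) * u))
    (add_pos_of_nonneg_of_pos (sq_nonneg (X - Y)) (mul_pos hY2 (sub_pos.2 hZ)))]

lemma integrableOn_sinh_mul_seriesDensity {t x : ℝ} (ht : |t| < 1) (hx : x ∈ Ico (0 : ℝ) 1) :
    IntegrableOn (fun u => sinh (x * u) * seriesDensity t u) (Ioi 0) := by
  refine (integrableOn_sinh_mul_mul_exp_neg_mul (a := 1)
    (abs_lt.2 ⟨by linarith [hx.1], hx.2⟩)).mono' (by unfold seriesDensity; fun_prop)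
    (ae_restrict_of_forall_mem measurableSet_Ioi fun u hu => ?_)
  have hsinh : 0 ≤ sinh (x * u) := sinh_nonneg_iff.2 (mul_nonneg hx.1 (le_of_lt hu))
  rw [norm_of_nonneg (mul_nonneg hsinh (seriesDensity_pos ht hu).le), neg_mul, one_mul]
  exact mul_le_mul_of_nonneg_left (seriesDensity_le_exp_neg ht.le hu) hsinh

lemma integral_sinh_mul_exp_neg_inv_mul {t x : ℝ} (ht : t ∈ Ioo (0 : ℝ) 1) (hx : |x| < 1) :
    ∫ u in Ioi 0, sinh (x * u) * exp (-t⁻¹ * u) = t ^ 2 * x / (1 - t ^ 2 * x ^ 2) := by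
  have hinv : 1 < t⁻¹ := one_lt_inv₀ ht.1 |>.2 ht.2
  rw [integral_sinh_mul_mul_exp_neg_mul (by linarith)]
  have : x ^ 2 < 1 := by nlinarith [sq_abs x, abs_nonneg x]
  have : 0 < 1 - t ^ 2 * x ^ 2 := by nlinarith [ht.1, ht.2]
  have : t ≠ 0 := ht.1.ne'
  field_simp

lemma strictMonoOn_kII_one_sub_kII_Ico {t : ℝ} (ht : t ∈ Ico (0 : ℝ) 1) :
    StrictMonoOn (fun x => kII 1 x - kII t x) (Ico 0 1) := by
  have habs : |t| < 1 := abs_lt.2 ⟨by linarith [ht.1], ht.2⟩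
  have hmem : ∀ x ∈ Ico (0 : ℝ) 1, x ∈ Ioo (-1 : ℝ) 1 := fun x hx => ⟨by linarith [hx.1], hx.2⟩
  have hS := fun x (hx : x ∈ Ico (0 : ℝ) 1) => integrableOn_sinh_mul_seriesDensity habs hx
  rcases ht.1.eq_or_lt with rfl | ht₀
  · refine (strictMonoOn_integral_sinh_mul (fun u hu => seriesDensity_pos habs hu) hS).congr
      fun x hx => ?_
    simp [kII_one_sub_kII habs.le (hmem x hx), tsum_diffTerm_eq_integral habs.le hx]
  have hE : ∀ x ∈ Ico (0 : ℝ) 1, IntegrableOn (fun u => sinh (x * u) * exp (-t⁻¹ * u)) (Ioi 0) :=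
    fun x hx => integrableOn_sinh_mul_mul_exp_neg_mul (by
      linarith [abs_lt.2 (hmem x hx), one_lt_inv₀ ht₀ |>.2 ht.2])
  refine (strictMonoOn_integral_sinh_mul (w := fun u => seriesDensity t u - exp (-t⁻¹ * u))
    (fun u hu => sub_pos.2 (exp_neg_inv_mul_lt_seriesDensity ⟨ht₀, ht.2⟩ hu))
    (fun x hx => ((hS x hx).sub (hE x hx)).congr_fun (fun u _ => (mul_sub _ _ _).symm)
      measurableSet_Ioi)).congr fun x hx => ?_
  simp only [mul_sub]
  rw [integral_sub (hS x hx) (hE x hx), kII_one_sub_kII habs.le (hmem x hx),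
    tsum_diffTerm_eq_integral habs.le hx,
    integral_sinh_mul_exp_neg_inv_mul ⟨ht₀, ht.2⟩ (abs_lt.2 (hmem x hx))]

lemma strictMonoOn_kII_one_sub_kII {t : ℝ} (ht : t ∈ Ioo (-1 : ℝ) 1) :
    StrictMonoOn (fun x => kII 1 x - kII t x) (Ioo (-1) 1) := by
  wlog ht₀ : 0 ≤ t generalizing t
  · simpa [kII_neg_left] using this (t := -t) ⟨by linarith [ht.2], by linarith [ht.1]⟩ (by linarith)
  exact (strictMonoOn_kII_one_sub_kII_Ico ⟨ht₀, ht.2⟩).Ioo_of_odd one_pos fun x _ => by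
    simp only [kII_neg_right]
    ring

/-! ### The transfer operator -/

noncomputable def invSlash (f : ℝ → ℝ) (u : ℝ) : ℝ := 1 / u ^ 2 * f (-1 / u)

section invSlash

variable {f : ℝ → ℝ}

lemma neg_one_div_mem_Ioo {u : ℝ} (hu : 1 < |u|) : -1 / u ∈ Ioo (-1 : ℝ) 1 := by
  rw [mem_Ioo, ← abs_lt, abs_div, abs_neg, abs_one, div_lt_one (by linarith)]
  exact hu

lemma abs_invSlash_le {M : ℝ} (hf : ∀ y ∈ Ioo (-1 : ℝ) 1, |f y| ≤ M) {u : ℝ} (hu : 1 < |u|) :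
    |invSlash f u| ≤ M / u ^ 2 := by
  rw [invSlash, abs_mul, abs_of_nonneg (by positivity), one_div_mul_eq_div]
  exact div_le_div_of_nonneg_right (hf _ (neg_one_div_mem_Ioo hu)) (sq_nonneg u)

lemma invSlash_neg (hodd : ∀ y ∈ Ioo (-1 : ℝ) 1, f (-y) = -f y) {u : ℝ} (hu : 1 < |u|) :
    invSlash f (-u) = -invSlash f u := by
  rw [invSlash, invSlash, neg_sq, div_neg, hodd _ (neg_one_div_mem_Ioo hu), mul_neg]

lemma strictMonoOn_invSlash_Ioi (hodd : ∀ y ∈ Ioo (-1 : ℝ) 1, f (-y) = -f y)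
    (hmono : StrictMonoOn f (Ioo (-1) 1)) : StrictMonoOn (invSlash f) (Ioi 1) := by
  intro u (hu : 1 < u) v (hv : 1 < v) huv
  have hmem : ∀ w : ℝ, 1 < w → -1 / w ∈ Ioo (-1 : ℝ) 1 := fun w hw =>
    neg_one_div_mem_Ioo (by rwa [abs_of_pos (by linarith)])
  have hf0 : f 0 = 0 := apply_zero_of_odd hodd ⟨by norm_num, by norm_num⟩
  have hfv : f (-1 / v) < 0 :=
    hf0 ▸ hmono (hmem v hv) ⟨by norm_num, by norm_num⟩
      (div_neg_of_neg_of_pos (by norm_num) (by linarith))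
  have hfuv : f (-1 / u) < f (-1 / v) := hmono (hmem u hu) (hmem v hv) (by
    rw [neg_div, neg_div, neg_lt_neg_iff]; exact one_div_lt_one_div_of_lt (by linarith) huv)
  have hsq : 1 / v ^ 2 < 1 / u ^ 2 := one_div_lt_one_div_of_lt (by positivity) (by nlinarith)
  calc 1 / u ^ 2 * f (-1 / u) < 1 / u ^ 2 * f (-1 / v) :=
        mul_lt_mul_of_pos_left hfuv (by positivity)
    _ < 1 / v ^ 2 * f (-1 / v) := mul_lt_mul_of_neg_right hsq hfv

lemma strictMonoOn_invSlash_Iio (hodd : ∀ y ∈ Ioo (-1 : ℝ) 1, f (-y) = -f y)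
    (hmono : StrictMonoOn f (Ioo (-1) 1)) : StrictMonoOn (invSlash f) (Iio (-1)) := by
  simpa using (strictMonoOn_invSlash_Ioi hodd hmono).neg_of_odd fun u (hu : 1 < u) =>
    invSlash_neg hodd (by rwa [abs_of_pos (by linarith)])

end invSlash

lemma two_mul_abs_sub_one_lt_abs_add {x : ℝ} (hx : x ∈ Ioo (-1 : ℝ) 1) (y : ℝ) :
    2 * |y| - 1 < |x + 2 * y| := by
  have h := abs_sub_abs_le_abs_sub (2 * y) (-x)
  rw [abs_neg, sub_neg_eq_add, add_comm, abs_mul, abs_two] at h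
  linarith [abs_lt.2 hx]

lemma one_le_abs_intCast (i : {i : ℤ // i ≠ 0}) : (1 : ℝ) ≤ |((i : ℤ) : ℝ)| := by
  rw [← Int.cast_abs]
  exact_mod_cast Int.one_le_abs i.2

lemma one_lt_abs_add_two_mul {x : ℝ} (hx : x ∈ Ioo (-1 : ℝ) 1) (i : {i : ℤ // i ≠ 0}) :
    1 < |x + 2 * ((i : ℤ) : ℝ)| := by
  linarith [two_mul_abs_sub_one_lt_abs_add hx (i : ℤ), one_le_abs_intCast i]

section Tsub

variable {f g : ℝ → ℝ}

lemma Tsub_one_apply (f : ℝ → ℝ) (x : ℝ) :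
    Tsub 1 f x = ∑' i : {i : ℤ // i ≠ 0}, invSlash f (x + 2 * ((i : ℤ) : ℝ)) :=
  rfl

lemma summable_one_div_intCast_sq :
    Summable fun i : {i : ℤ // i ≠ 0} => 1 / ((i : ℤ) : ℝ) ^ 2 :=
  (summable_one_div_int_pow.mpr one_lt_two).comp_injective Subtype.val_injective

lemma abs_invSlash_add_two_mul_le {M : ℝ} (hf : ∀ y ∈ Ioo (-1 : ℝ) 1, |f y| ≤ M) {x : ℝ}
    (hx : x ∈ Ioo (-1 : ℝ) 1) (i : {i : ℤ // i ≠ 0}) :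
    |invSlash f (x + 2 * ((i : ℤ) : ℝ))| ≤ M * (1 / ((i : ℤ) : ℝ) ^ 2) := by
  have hM : 0 ≤ M := (abs_nonneg _).trans (hf 0 ⟨by norm_num, by norm_num⟩)
  have hsq : ((i : ℤ) : ℝ) ^ 2 ≤ (x + 2 * ((i : ℤ) : ℝ)) ^ 2 :=
    sq_le_sq.2 (by linarith [two_mul_abs_sub_one_lt_abs_add hx (i : ℤ), one_le_abs_intCast i])
  have hi : (0 : ℝ) < ((i : ℤ) : ℝ) ^ 2 := by
    have : ((i : ℤ) : ℝ) ≠ 0 := Int.cast_ne_zero.mpr i.2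
    positivity
  rw [mul_one_div]
  exact (abs_invSlash_le hf (one_lt_abs_add_two_mul hx i)).trans
    (div_le_div_of_nonneg_left hM hi hsq)

lemma summable_abs_invSlash_add_two_mul {M : ℝ} (hf : ∀ y ∈ Ioo (-1 : ℝ) 1, |f y| ≤ M) {x : ℝ}
    (hx : x ∈ Ioo (-1 : ℝ) 1) :
    Summable fun i : {i : ℤ // i ≠ 0} => |invSlash f (x + 2 * ((i : ℤ) : ℝ))| :=
  (summable_one_div_intCast_sq.mul_left M).of_nonneg_of_le (fun _ => abs_nonneg _)
    (abs_invSlash_add_two_mul_le hf hx)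

lemma abs_Tsub_one_le {M : ℝ} (hf : ∀ y ∈ Ioo (-1 : ℝ) 1, |f y| ≤ M) {x : ℝ}
    (hx : x ∈ Ioo (-1 : ℝ) 1) :
    |Tsub 1 f x| ≤ M * ∑' i : {i : ℤ // i ≠ 0}, 1 / ((i : ℤ) : ℝ) ^ 2 := by
  rw [← tsum_mul_left]
  exact tsum_of_norm_bounded (f := fun i : {i : ℤ // i ≠ 0} => invSlash f (x + 2 * ((i : ℤ) : ℝ)))
    (summable_one_div_intCast_sq.mul_left M).hasSum (abs_invSlash_add_two_mul_le hf hx)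

lemma exists_abs_iterate_Tsub_one_le (hf : ∃ M, ∀ y ∈ Ioo (-1 : ℝ) 1, |f y| ≤ M) (m : ℕ) :
    ∃ M, ∀ x ∈ Ioo (-1 : ℝ) 1, |(Tsub 1)^[m] f x| ≤ M := by
  induction m with
  | zero => exact hf
  | succ m ih =>
    obtain ⟨M, hM⟩ := ih
    exact ⟨_, fun x hx => by rw [Function.iterate_succ_apply']; exact abs_Tsub_one_le hM hx⟩

lemma Tsub_one_neg (hodd : ∀ y ∈ Ioo (-1 : ℝ) 1, f (-y) = -f y) {x : ℝ}
    (hx : x ∈ Ioo (-1 : ℝ) 1) : Tsub 1 f (-x) = -Tsub 1 f x := by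
  let e : {i : ℤ // i ≠ 0} ≃ {i : ℤ // i ≠ 0} :=
    (Equiv.neg ℤ).subtypeEquiv fun _ => neg_ne_zero.symm
  rw [Tsub_one_apply, Tsub_one_apply, ← e.tsum_eq, ← tsum_neg]
  refine tsum_congr fun i => ?_
  have : -x + 2 * (((e i : {i : ℤ // i ≠ 0}) : ℤ) : ℝ) = -(x + 2 * ((i : ℤ) : ℝ)) := by
    change -x + 2 * ((-(i : ℤ) : ℤ) : ℝ) = _
    push_cast
    ring
  rw [this, invSlash_neg hodd (one_lt_abs_add_two_mul hx i)]

lemma Tsub_one_strictMonoOn {M : ℝ} (hf : ∀ y ∈ Ioo (-1 : ℝ) 1, |f y| ≤ M)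
    (hodd : ∀ y ∈ Ioo (-1 : ℝ) 1, f (-y) = -f y) (hmono : StrictMonoOn f (Ioo (-1) 1)) :
    StrictMonoOn (Tsub 1 f) (Ioo (-1) 1) := by
  intro x hx y hy hxy
  have hterm : ∀ i : {i : ℤ // i ≠ 0},
      invSlash f (x + 2 * ((i : ℤ) : ℝ)) < invSlash f (y + 2 * ((i : ℤ) : ℝ)) := fun i => by
    have hxy' : x + 2 * ((i : ℤ) : ℝ) < y + 2 * ((i : ℤ) : ℝ) := by linarith
    rcases lt_or_gt_of_ne i.2 with hi | hi
    · have hi' : ((i : ℤ) : ℝ) ≤ -1 := by exact_mod_cast Int.le_sub_one_of_lt hi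
      exact strictMonoOn_invSlash_Iio hodd hmono (show x + 2 * _ < -1 by linarith [hx.2])
        (show y + 2 * _ < -1 by linarith [hy.2]) hxy'
    · have hi' : (1 : ℝ) ≤ ((i : ℤ) : ℝ) := by exact_mod_cast hi
      exact strictMonoOn_invSlash_Ioi hodd hmono (show 1 < x + 2 * _ by linarith [hx.1])
        (show 1 < y + 2 * _ by linarith [hy.1]) hxy'
  exact Summable.tsum_lt_tsum (fun i => (hterm i).le) (hterm ⟨1, one_ne_zero⟩)
    (summable_abs_invSlash_add_two_mul hf hx).of_abs
    (summable_abs_invSlash_add_two_mul hf hy).of_abs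

lemma Tsub_one_congr (h : EqOn f g (Ioo (-1 : ℝ) 1)) {x : ℝ} (hx : x ∈ Ioo (-1 : ℝ) 1) :
    Tsub 1 f x = Tsub 1 g x :=
  tsum_congr fun i => by rw [h (neg_one_div_mem_Ioo (one_lt_abs_add_two_mul hx i))]

lemma Tsub_one_sub {Mf Mg : ℝ} (hf : ∀ y ∈ Ioo (-1 : ℝ) 1, |f y| ≤ Mf)
    (hg : ∀ y ∈ Ioo (-1 : ℝ) 1, |g y| ≤ Mg) {x : ℝ} (hx : x ∈ Ioo (-1 : ℝ) 1) :
    Tsub 1 (fun y => f y - g y) x = Tsub 1 f x - Tsub 1 g x := by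
  rw [Tsub_one_apply, Tsub_one_apply, Tsub_one_apply,
    ← (summable_abs_invSlash_add_two_mul hf hx).of_abs.tsum_sub
      (summable_abs_invSlash_add_two_mul hg hx).of_abs]
  exact tsum_congr fun i => mul_sub _ _ _

lemma iterate_Tsub_one_sub (hf : ∃ M, ∀ y ∈ Ioo (-1 : ℝ) 1, |f y| ≤ M)
    (hg : ∃ M, ∀ y ∈ Ioo (-1 : ℝ) 1, |g y| ≤ M) (m : ℕ) :
    EqOn ((Tsub 1)^[m] fun y => f y - g y) (fun x => (Tsub 1)^[m] f x - (Tsub 1)^[m] g x)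
      (Ioo (-1) 1) := by
  induction m with
  | zero => exact fun _ _ => rfl
  | succ m ih =>
    intro x hx
    obtain ⟨Mf, hMf⟩ := exists_abs_iterate_Tsub_one_le hf m
    obtain ⟨Mg, hMg⟩ := exists_abs_iterate_Tsub_one_le hg m
    simp only [Function.iterate_succ_apply']
    rw [Tsub_one_congr ih hx, Tsub_one_sub hMf hMg hx]

lemma iterate_Tsub_one_odd_strictMonoOn (hf : ∃ M, ∀ y ∈ Ioo (-1 : ℝ) 1, |f y| ≤ M)
    (hodd : ∀ y ∈ Ioo (-1 : ℝ) 1, f (-y) = -f y) (hmono : StrictMonoOn f (Ioo (-1) 1))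
    (m : ℕ) :
    (∀ x ∈ Ioo (-1 : ℝ) 1, (Tsub 1)^[m] f (-x) = -(Tsub 1)^[m] f x) ∧
      StrictMonoOn ((Tsub 1)^[m] f) (Ioo (-1) 1) := by
  induction m with
  | zero => exact ⟨hodd, hmono⟩
  | succ m ih =>
    obtain ⟨M, hM⟩ := exists_abs_iterate_Tsub_one_le hf m
    rw [Function.iterate_succ_apply']
    exact ⟨fun x hx => Tsub_one_neg ih.1 hx, Tsub_one_strictMonoOn hM ih.1 ih.2⟩

end Tsub

end KII

open KII

/-- For fixed `t ∈ (-1,1)` and each `j`, the iterate `T₁^j[k₁^{II}(1,·) - k₁^{II}(t,·)]`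
is well defined (all series converge absolutely), odd, and strictly increasing on `(-1,1)`;
in particular `T₁^j k₁^{II}(t,·) < T₁^j k₁^{II}(1,·)` on `(0,1)`. -/
theorem iterates_of_kII_difference_odd_strictMono
    (t : ℝ) (ht : t ∈ Ioo (-1 : ℝ) 1) (j : ℕ) :
    (∀ m : ℕ, m < j → ∀ x ∈ Ioo (-1 : ℝ) 1,
      Summable (fun i : {i : ℤ // i ≠ 0} =>
        |(1 / (x + 2 * ((i : ℤ) : ℝ)) ^ 2) *
          ((Tsub 1)^[m] (fun y => kII 1 y - kII t y)) (-1 / (x + 2 * ((i : ℤ) : ℝ)))|)) ∧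
    (∀ x ∈ Ioo (-1 : ℝ) 1,
      ((Tsub 1)^[j] (fun y => kII 1 y - kII t y)) (-x) =
        -((Tsub 1)^[j] (fun y => kII 1 y - kII t y)) x) ∧
    StrictMonoOn ((Tsub 1)^[j] (fun y => kII 1 y - kII t y)) (Ioo (-1 : ℝ) 1) ∧
    (∀ x ∈ Ioo (0 : ℝ) 1, ((Tsub 1)^[j] (kII t)) x < ((Tsub 1)^[j] (kII 1)) x) := by
  have hb₁ := exists_abs_kII_le (t := 1) ⟨by norm_num, le_rfl⟩
  have hbₜ := exists_abs_kII_le ⟨ht.1, ht.2.le⟩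
  have hbd : ∃ M, ∀ x ∈ Ioo (-1 : ℝ) 1, |kII 1 x - kII t x| ≤ M := by
    obtain ⟨M₁, h₁⟩ := hb₁
    obtain ⟨Mₜ, hₜ⟩ := hbₜ
    exact ⟨M₁ + Mₜ, fun x hx => (abs_sub _ _).trans (add_le_add (h₁ x hx) (hₜ x hx))⟩
  have hodd : ∀ x ∈ Ioo (-1 : ℝ) 1, kII 1 (-x) - kII t (-x) = -(kII 1 x - kII t x) :=
    fun x _ => by rw [kII_neg_right, kII_neg_right]; ring
  obtain ⟨hoddⱼ, hmonoⱼ⟩ :=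
    iterate_Tsub_one_odd_strictMonoOn hbd hodd (strictMonoOn_kII_one_sub_kII ht) j
  refine ⟨fun m _ x hx => ?_, hoddⱼ, hmonoⱼ, fun x hx => ?_⟩
  · obtain ⟨M, hM⟩ := exists_abs_iterate_Tsub_one_le hbd m
    exact summable_abs_invSlash_add_two_mul hM hx
  · have hx' : x ∈ Ioo (-1 : ℝ) 1 := ⟨by linarith [hx.1], hx.2⟩
    have hpos := hmonoⱼ ⟨by norm_num, by norm_num⟩ hx' hx.1
    rw [apply_zero_of_odd hoddⱼ ⟨by norm_num, by norm_num⟩, iterate_Tsub_one_sub hb₁ hbₜ j hx']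
      at hpos
    linarith
end

section
/- Let γ > 0 and let (a_j)_{j≥0} be real numbers such that the power series f(x) := ∑_{j=0}^{∞} a_j x^j converges for |x| < γ. Assume that one of the following holds: (a) a_j ≥ 0 for all j; (b) a_j ≤ 0 for all j; or (c) there exists j₀ ∈ ℕ with a_j ≥ 0 for j ≤ j₀ and a_j ≤ 0 for j > j₀. If f does not vanish identically on (−γ,γ), then f has at most one zero in the open interval (0,γ); and if x₀ ∈ (0,γ) satisfies f(x₀) = 0, then f(x) > 0 for 0 < x < x₀ and f(x) < 0 for x₀ < x < γ. -/
/-!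
If the coefficients change sign once, at `j₀`, then `x ↦ x⁻ʲ⁰ f(x) = ∑ aⱼ xʲ⁻ʲ⁰` is strictly
decreasing on `(0,γ)`: every term is nonincreasing (a nonnegative coefficient with exponent `≤ 0`
or a nonpositive one with exponent `> 0`), and some term is strictly decreasing unless `f` is a
monomial. Cleared of denominators: `xʲ⁰ f(y) < yʲ⁰ f(x)` for `0 < x < y`. So `f` can vanish at most once there, and changes sign from `+` to `-` at its zero.
Coefficients of constant sign leave no zero in `(0,γ)` at all.
-/

open Set

section
variable {a : ℕ → ℝ} {x y : ℝ}

lemma pow_mul_pow_lt_pow_mul_pow {j k : ℕ} (hx : 0 < x) (hxy : x < y) (hjk : j < k) :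
    x ^ k * y ^ j < y ^ k * x ^ j := by
  obtain ⟨m, rfl⟩ := Nat.exists_eq_add_of_lt hjk
  have hxy' : x ^ (m + 1) < y ^ (m + 1) := pow_lt_pow_left₀ hxy hx.le m.succ_ne_zero
  calc x ^ (j + m + 1) * y ^ j = (x * y) ^ j * x ^ (m + 1) := by ring
    _ < (x * y) ^ j * y ^ (m + 1) := mul_lt_mul_of_pos_left hxy' (pow_pos (mul_pos hx (hx.trans hxy)) j)
    _ = y ^ (j + m + 1) * x ^ j := by ring

lemma pow_mul_pow_le_pow_mul_pow {j k : ℕ} (hx : 0 < x) (hxy : x < y) (hjk : j ≤ k) :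
    x ^ k * y ^ j ≤ y ^ k * x ^ j := by
  rcases hjk.lt_or_eq with hjk | rfl
  · exact (pow_mul_pow_lt_pow_mul_pow hx hxy hjk).le
  · exact (mul_comm _ _).le

lemma pow_mul_coeff_lt_of_signChange {j₀ j : ℕ} (hle : ∀ j ≤ j₀, 0 ≤ a j)
    (hgt : ∀ j, j₀ < j → a j ≤ 0) (hx : 0 < x) (hxy : x < y) (hj : j ≠ j₀) (ha : a j ≠ 0) :
    x ^ j₀ * (a j * y ^ j) < y ^ j₀ * (a j * x ^ j) := by
  rcases hj.lt_or_gt with hj | hj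
  · have := mul_lt_mul_of_pos_left (pow_mul_pow_lt_pow_mul_pow hx hxy hj)
      ((hle j hj.le).lt_of_ne' ha)
    linarith
  · have := mul_lt_mul_of_neg_left (pow_mul_pow_lt_pow_mul_pow hx hxy hj)
      ((hgt j hj).lt_of_ne ha)
    linarith

lemma pow_mul_coeff_le_of_signChange {j₀ : ℕ} (hle : ∀ j ≤ j₀, 0 ≤ a j)
    (hgt : ∀ j, j₀ < j → a j ≤ 0) (hx : 0 < x) (hxy : x < y) (j : ℕ) :
    x ^ j₀ * (a j * y ^ j) ≤ y ^ j₀ * (a j * x ^ j) := by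
  by_cases hj : j = j₀
  · subst hj; apply le_of_eq; ring
  by_cases ha : a j = 0
  · simp [ha]
  exact (pow_mul_coeff_lt_of_signChange hle hgt hx hxy hj ha).le

lemma pow_mul_tsum_lt_of_signChange {j₀ : ℕ} (hle : ∀ j ≤ j₀, 0 ≤ a j)
    (hgt : ∀ j, j₀ < j → a j ≤ 0) (hne : ∃ j ≠ j₀, a j ≠ 0) (hx : 0 < x) (hxy : x < y)
    (hsx : Summable fun j => a j * x ^ j) (hsy : Summable fun j => a j * y ^ j) :
    x ^ j₀ * ∑' j, a j * y ^ j < y ^ j₀ * ∑' j, a j * x ^ j := by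
  obtain ⟨j, hj, ha⟩ := hne
  rw [← tsum_mul_left, ← tsum_mul_left]
  exact Summable.tsum_lt_tsum (pow_mul_coeff_le_of_signChange hle hgt hx hxy)
    (pow_mul_coeff_lt_of_signChange hle hgt hx hxy hj ha) (hsy.mul_left _) (hsx.mul_left _)

lemma tsum_mul_pow_pos_of_nonneg (ha : ∀ j, 0 ≤ a j) (hne : ∃ j, a j ≠ 0) (hx : 0 < x)
    (hs : Summable fun j => a j * x ^ j) : 0 < ∑' j, a j * x ^ j := by
  obtain ⟨j, hj⟩ := hne
  exact hs.tsum_pos (fun i => mul_nonneg (ha i) (pow_nonneg hx.le i)) j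
    (mul_pos ((ha j).lt_of_ne' hj) (pow_pos hx j))

lemma tsum_mul_pow_neg_of_nonpos (ha : ∀ j, a j ≤ 0) (hne : ∃ j, a j ≠ 0) (hx : 0 < x)
    (hs : Summable fun j => a j * x ^ j) : ∑' j, a j * x ^ j < 0 := by
  have := tsum_mul_pow_pos_of_nonneg (a := -a) (fun j => neg_nonneg.2 (ha j))
    (by simpa using hne) hx (by simpa [neg_mul] using hs.neg)
  simpa [neg_mul, tsum_neg] using this

lemma exists_ne_coeff_ne_zero_of_tsum_eq_zero (j₀ : ℕ) (hne : ∃ j, a j ≠ 0) (hx : x ≠ 0)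
    (h : ∑' j, a j * x ^ j = 0) : ∃ j ≠ j₀, a j ≠ 0 := by
  by_contra! hmono
  rw [tsum_eq_single j₀ fun j hj => by rw [hmono j hj, zero_mul]] at h
  obtain ⟨j, hj⟩ := hne
  obtain rfl | hjj₀ := eq_or_ne j j₀
  · exact hj (by simpa [hx] using h)
  · exact hj (hmono j hjj₀)

end

theorem powerSeries_sign_change_at_most_one_zero_general
    (γ : ℝ) (a : ℕ → ℝ)
    (hconv : ∀ x : ℝ, |x| < γ → Summable (fun j : ℕ => a j * x ^ j))
    (hsign : (∀ j, 0 ≤ a j) ∨ (∀ j, a j ≤ 0) ∨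
      (∃ j₀ : ℕ, (∀ j ≤ j₀, 0 ≤ a j) ∧ ∀ j, j₀ < j → a j ≤ 0))
    (f : ℝ → ℝ) (hf : ∀ x : ℝ, f x = ∑' j : ℕ, a j * x ^ j)
    (hne : ¬ ∀ x ∈ Ioo (-γ) γ, f x = 0) :
    (∀ x₀ ∈ Ioo (0 : ℝ) γ, ∀ x₁ ∈ Ioo (0 : ℝ) γ, f x₀ = 0 → f x₁ = 0 → x₀ = x₁) ∧
    (∀ x₀ ∈ Ioo (0 : ℝ) γ, f x₀ = 0 →
      (∀ x : ℝ, 0 < x → x < x₀ → 0 < f x) ∧ (∀ x : ℝ, x₀ < x → x < γ → f x < 0)) := by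
  have hsum : ∀ x, 0 < x → x < γ → Summable fun j => a j * x ^ j :=
    fun x hx hxγ => hconv x (by rwa [abs_of_pos hx])
  have hcoeff : ∃ j, a j ≠ 0 := by
    by_contra! h
    exact hne fun x _ => by simp [hf, h]
  suffices hzero : ∀ x₀ ∈ Ioo (0 : ℝ) γ, f x₀ = 0 →
      (∀ x : ℝ, 0 < x → x < x₀ → 0 < f x) ∧ (∀ x : ℝ, x₀ < x → x < γ → f x < 0) by
    refine ⟨fun x₀ h₀ x₁ h₁ hz₀ hz₁ => ?_, hzero⟩
    by_contra hx
    rcases lt_or_gt_of_ne hx with hlt | hlt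
    · exact ((hzero x₀ h₀ hz₀).2 x₁ hlt h₁.2).ne hz₁
    · exact ((hzero x₁ h₁ hz₁).2 x₀ hlt h₀.2).ne hz₀
  rintro x₀ ⟨hx₀, hx₀γ⟩ hz
  rw [hf] at hz
  simp only [hf]
  rcases hsign with hnn | hnp | ⟨j₀, hle, hgt⟩
  · exact absurd hz (tsum_mul_pow_pos_of_nonneg hnn hcoeff hx₀ (hsum x₀ hx₀ hx₀γ)).ne'
  · exact absurd hz (tsum_mul_pow_neg_of_nonpos hnp hcoeff hx₀ (hsum x₀ hx₀ hx₀γ)).ne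
  have hne₀ := exists_ne_coeff_ne_zero_of_tsum_eq_zero j₀ hcoeff hx₀.ne' hz
  refine ⟨fun x hx hxx₀ => ?_, fun x hx₀x hxγ => ?_⟩
  · have := pow_mul_tsum_lt_of_signChange hle hgt hne₀ hx hxx₀
      (hsum x hx (hxx₀.trans hx₀γ)) (hsum x₀ hx₀ hx₀γ)
    rw [hz, mul_zero] at this
    exact pos_of_mul_pos_right this (pow_nonneg hx₀.le _)
  · have := pow_mul_tsum_lt_of_signChange hle hgt hne₀ hx₀ hx₀x
      (hsum x₀ hx₀ hx₀γ) (hsum x (hx₀.trans hx₀x) hxγ)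
    rw [hz, mul_zero] at this
    exact neg_of_mul_neg_right this (pow_nonneg hx₀.le _)

/-- A real power series whose coefficient sequence is nonnegative, or nonpositive, or
changes sign (from `≥ 0` to `≤ 0`) exactly once, has at most one zero in `(0,γ)`; and at
such a zero it changes sign from positive to negative. -/
theorem powerSeries_sign_change_at_most_one_zero
    (γ : ℝ) (hγ : 0 < γ) (a : ℕ → ℝ)
    (hconv : ∀ x : ℝ, |x| < γ → Summable (fun j : ℕ => a j * x ^ j))
    (hsign : (∀ j, 0 ≤ a j) ∨ (∀ j, a j ≤ 0) ∨
      (∃ j₀ : ℕ, (∀ j ≤ j₀, 0 ≤ a j) ∧ ∀ j, j₀ < j → a j ≤ 0))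
    (f : ℝ → ℝ) (hf : ∀ x : ℝ, f x = ∑' j : ℕ, a j * x ^ j)
    (hne : ¬ ∀ x ∈ Ioo (-γ) γ, f x = 0) :
    (∀ x₀ ∈ Ioo (0 : ℝ) γ, ∀ x₁ ∈ Ioo (0 : ℝ) γ, f x₀ = 0 → f x₁ = 0 → x₀ = x₁) ∧
    (∀ x₀ ∈ Ioo (0 : ℝ) γ, f x₀ = 0 →
      (∀ x : ℝ, 0 < x → x < x₀ → 0 < f x) ∧ (∀ x : ℝ, x₀ < x → x < γ → f x < 0)) :=
  powerSeries_sign_change_at_most_one_zero_general γ a hconv hsign f hf hne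
end
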